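/- arXiv:2506.22851 — 5 statements merged into one kernel-verified Lean document; each statement's English description precedes it below -/
import Mathlib

section
/- Let d ∈ ℕ, let A be a nonempty finite set, let c, L₁, L₂ ∈ [0,∞) with cL₁ < 1 and cL₂ < 1, let w : ℝ^d → (0,∞) be measurable, let f₁, f₂ : ℝ^d × ℝ^A → ℝ be measurable with |fᵢ(x,r) − fᵢ(x,s)| ≤ Lᵢ · max_{a∈A} |r(a) − s(a)| for i ∈ {1,2}, let κ^{(a)} : ℝ^d × B(ℝ^d) → [0,1], a ∈ A, be stochastic kernels with ∫ w(y) κ^{(a)}(x,dy) ≤ c·w(x) for all x, a, and suppose sup_{x,a} w(x)^{-1} ∫ |fᵢ(y,0)| κ^{(a)}(x,dy) < ∞ for i ∈ {1,2}. If u₁, u₂ : ℝ^d → ℝ^A are the unique bounded-relative-to-w measurable solutions of (uᵢ(x))(a) = ∫ fᵢ(y, uᵢ(y)) κ^{(a)}(x,dy), then sup_{(x,a)} |u₁(x)(a) − u₂(x)(a)|/w(x) ≤ (c / (1 − c·min{L₁,L₂})) · sup_{(y,r)} |f₁(y,r) − f₂(y,r)|/w(y). -/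
open MeasureTheory ProbabilityTheory

/-- One contraction step for the stability estimate. -/
lemma key_step {d : ℕ} {A : Type*} [Fintype A] [Nonempty A]
    (c L D K : ℝ) (hc : 0 ≤ c) (hL : 0 ≤ L) (hD : 0 ≤ D) (hK : 0 ≤ K)
    (w : EuclideanSpace ℝ (Fin d) → ℝ)
    (f₁ f₂ : EuclideanSpace ℝ (Fin d) → (A → ℝ) → ℝ)
    (hf₁lip : ∀ x r s, |f₁ x r - f₁ x s| ≤ L * ⨆ a, |r a - s a|)
    (κ : A → Kernel (EuclideanSpace ℝ (Fin d)) (EuclideanSpace ℝ (Fin d)))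
    (hwint : ∀ a x, Integrable w (κ a x))
    (hwbd : ∀ a x, ∫ y, w y ∂(κ a x) ≤ c * w x)
    (u₁ u₂ : EuclideanSpace ℝ (Fin d) → A → ℝ)
    (hu₁int : ∀ a x, Integrable (fun y => f₁ y (u₁ y)) (κ a x))
    (hu₂int : ∀ a x, Integrable (fun y => f₂ y (u₂ y)) (κ a x))
    (hu₁fix : ∀ a x, u₁ x a = ∫ y, f₁ y (u₁ y) ∂(κ a x))
    (hu₂fix : ∀ a x, u₂ x a = ∫ y, f₂ y (u₂ y) ∂(κ a x))
    (hDb : ∀ y r, |f₁ y r - f₂ y r| ≤ D * w y)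
    (hKb : ∀ x a, |u₁ x a - u₂ x a| ≤ K * w x) :
    ∀ x a, |u₁ x a - u₂ x a| ≤ c * (L * K + D) * w x := by
  intro x a
  have hpt : ∀ y, |f₁ y (u₁ y) - f₂ y (u₂ y)| ≤ (L * K + D) * w y := by
    intro y
    have h1 : |f₁ y (u₁ y) - f₂ y (u₂ y)| ≤
        |f₁ y (u₁ y) - f₁ y (u₂ y)| + |f₁ y (u₂ y) - f₂ y (u₂ y)| :=
      abs_sub_le _ _ _
    have h2 : |f₁ y (u₁ y) - f₁ y (u₂ y)| ≤ L * (K * w y) := by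
      refine (hf₁lip y (u₁ y) (u₂ y)).trans ?_
      refine mul_le_mul_of_nonneg_left ?_ hL
      exact ciSup_le fun b => hKb y b
    have h3 : |f₁ y (u₂ y) - f₂ y (u₂ y)| ≤ D * w y := hDb y (u₂ y)
    nlinarith
  rw [hu₁fix a x, hu₂fix a x, ← integral_sub (hu₁int a x) (hu₂int a x)]
  calc |∫ y, (f₁ y (u₁ y) - f₂ y (u₂ y)) ∂(κ a x)|
      ≤ ∫ y, |f₁ y (u₁ y) - f₂ y (u₂ y)| ∂(κ a x) := by
        simpa [Real.norm_eq_abs] using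
          norm_integral_le_integral_norm (fun y => f₁ y (u₁ y) - f₂ y (u₂ y)) (μ := κ a x)
    _ ≤ ∫ y, (L * K + D) * w y ∂(κ a x) := by
        refine integral_mono ((hu₁int a x).sub (hu₂int a x)).abs
          ((hwint a x).const_mul _) hpt
    _ = (L * K + D) * ∫ y, w y ∂(κ a x) := integral_const_mul _ _
    _ ≤ (L * K + D) * (c * w x) := by
        refine mul_le_mul_of_nonneg_left (hwbd a x) (by positivity)
    _ = c * (L * K + D) * w x := by ring

/-- **Stability of stochastic fixed point equations with respect to the nonlinearity.**
If `u₁, u₂` are the unique `w`-bounded measurable solutions of the fixed point equations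
`(uᵢ(x))(a) = ∫ fᵢ(y, uᵢ(y)) κ^{(a)}(x, dy)`, then the weighted distance of `u₁` and `u₂`
is controlled by the weighted distance of `f₁` and `f₂`. -/
theorem stmt_0 {d : ℕ} {A : Type*} [Fintype A] [Nonempty A]
    (c L₁ L₂ : ℝ) (hc : 0 ≤ c) (hL₁ : 0 ≤ L₁) (hL₂ : 0 ≤ L₂)
    (hcL₁ : c * L₁ < 1) (hcL₂ : c * L₂ < 1)
    (w : EuclideanSpace ℝ (Fin d) → ℝ) (hw : Measurable w) (hwpos : ∀ x, 0 < w x)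
    (f₁ f₂ : EuclideanSpace ℝ (Fin d) → (A → ℝ) → ℝ)
    (hf₁m : Measurable (fun p : EuclideanSpace ℝ (Fin d) × (A → ℝ) => f₁ p.1 p.2))
    (hf₂m : Measurable (fun p : EuclideanSpace ℝ (Fin d) × (A → ℝ) => f₂ p.1 p.2))
    (hf₁lip : ∀ x r s, |f₁ x r - f₁ x s| ≤ L₁ * ⨆ a, |r a - s a|)
    (hf₂lip : ∀ x r s, |f₂ x r - f₂ x s| ≤ L₂ * ⨆ a, |r a - s a|)
    (κ : A → Kernel (EuclideanSpace ℝ (Fin d)) (EuclideanSpace ℝ (Fin d)))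
    (hκ : ∀ a, IsMarkovKernel (κ a))
    (hwint : ∀ a x, Integrable w (κ a x))
    (hwbd : ∀ a x, ∫ y, w y ∂(κ a x) ≤ c * w x)
    (hf₁0int : ∀ a x, Integrable (fun y => f₁ y 0) (κ a x))
    (hf₂0int : ∀ a x, Integrable (fun y => f₂ y 0) (κ a x))
    (hf₁0bd : ∃ C, ∀ a x, ∫ y, |f₁ y 0| ∂(κ a x) ≤ C * w x)
    (hf₂0bd : ∃ C, ∀ a x, ∫ y, |f₂ y 0| ∂(κ a x) ≤ C * w x)
    (u₁ u₂ : EuclideanSpace ℝ (Fin d) → A → ℝ)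
    (hu₁m : ∀ a, Measurable fun x => u₁ x a)
    (hu₂m : ∀ a, Measurable fun x => u₂ x a)
    (hu₁bdd : ∃ C, ∀ x a, |u₁ x a| ≤ C * w x)
    (hu₂bdd : ∃ C, ∀ x a, |u₂ x a| ≤ C * w x)
    (hu₁int : ∀ a x, Integrable (fun y => f₁ y (u₁ y)) (κ a x))
    (hu₂int : ∀ a x, Integrable (fun y => f₂ y (u₂ y)) (κ a x))
    (hu₁fix : ∀ a x, u₁ x a = ∫ y, f₁ y (u₁ y) ∂(κ a x))
    (hu₂fix : ∀ a x, u₂ x a = ∫ y, f₂ y (u₂ y) ∂(κ a x))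
    (D : ℝ) (hD : ∀ y r, |f₁ y r - f₂ y r| ≤ D * w y) :
    ∀ x a, |u₁ x a - u₂ x a| ≤ c / (1 - c * min L₁ L₂) * D * w x := by
  -- D is nonnegative
  have hD0 : 0 ≤ D := by
    have h := hD 0 0
    have hw0 := hwpos 0
    nlinarith [abs_nonneg (f₁ (0 : EuclideanSpace ℝ (Fin d)) 0 - f₂ 0 0)]
  set L : ℝ := min L₁ L₂ with hLdef
  have hL0 : 0 ≤ L := le_min hL₁ hL₂
  have hcL : c * L < 1 := lt_of_le_of_lt
    (mul_le_mul_of_nonneg_left (min_le_left _ _) hc) hcL₁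
  have h1cL : 0 < 1 - c * L := by linarith
  -- the set of admissible constants
  set S : Set ℝ := {K | 0 ≤ K ∧ ∀ x a, |u₁ x a - u₂ x a| ≤ K * w x} with hSdef
  obtain ⟨C₁, hC₁⟩ := hu₁bdd
  obtain ⟨C₂, hC₂⟩ := hu₂bdd
  have hSne : S.Nonempty := by
    refine ⟨max 0 (C₁ + C₂), le_max_left _ _, fun x a => ?_⟩
    have h := abs_sub (u₁ x a) (u₂ x a)
    have hwx := (hwpos x).le
    have : |u₁ x a - u₂ x a| ≤ (C₁ + C₂) * w x := by
      have := abs_sub_abs_le_abs_sub (u₁ x a) (u₂ x a)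
      calc |u₁ x a - u₂ x a| ≤ |u₁ x a| + |u₂ x a| := abs_sub _ _
        _ ≤ C₁ * w x + C₂ * w x := add_le_add (hC₁ x a) (hC₂ x a)
        _ = (C₁ + C₂) * w x := by ring
    exact this.trans (mul_le_mul_of_nonneg_right (le_max_right _ _) hwx)
  have hSbdd : BddBelow S := ⟨0, fun K hK => hK.1⟩
  set M : ℝ := sInf S with hMdef
  have hM0 : 0 ≤ M := le_csInf hSne fun K hK => hK.1
  have hMb : ∀ x a, |u₁ x a - u₂ x a| ≤ M * w x := by
    intro x a
    rw [← div_le_iff₀ (hwpos x)] at *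
    exact le_csInf hSne fun K hK => (div_le_iff₀ (hwpos x)).2 (hK.2 x a)
  -- the contraction step, using whichever Lipschitz constant is smaller
  have hstep : ∀ x a, |u₁ x a - u₂ x a| ≤ c * (L * M + D) * w x := by
    rcases le_total L₁ L₂ with h | h
    · have := key_step c L₁ D M hc hL₁ hD0 hM0 w f₁ f₂ hf₁lip κ hwint hwbd
        u₁ u₂ hu₁int hu₂int hu₁fix hu₂fix hD hMb
      simpa [hLdef, min_eq_left h] using this
    · have hD' : ∀ y r, |f₂ y r - f₁ y r| ≤ D * w y := by
        intro y r; rw [abs_sub_comm]; exact hD y r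
      have hMb' : ∀ x a, |u₂ x a - u₁ x a| ≤ M * w x := by
        intro x a; rw [abs_sub_comm]; exact hMb x a
      have := key_step c L₂ D M hc hL₂ hD0 hM0 w f₂ f₁ hf₂lip κ hwint hwbd
        u₂ u₁ hu₂int hu₁int hu₂fix hu₁fix hD' hMb'
      intro x a
      have h2 := this x a
      rw [abs_sub_comm] at h2
      simpa [hLdef, min_eq_right h] using h2
  have hMle : M ≤ c * (L * M + D) := by
    have hmem : c * (L * M + D) ∈ S := ⟨by positivity, hstep⟩
    exact csInf_le hSbdd hmem
  have hMfin : M ≤ c / (1 - c * L) * D := by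
    rw [div_mul_eq_mul_div, le_div_iff₀ h1cL]
    nlinarith
  intro x a
  exact (hMb x a).trans (mul_le_mul_of_nonneg_right hMfin (hwpos x).le)
end

section
/- Let d ∈ ℕ, let A be a nonempty finite set, let η, c, L, K ∈ [0,∞) with cL < 1 and ηL < 1, let w : ℝ^d → (0,∞) be measurable, let f : ℝ^d × ℝ^A → ℝ be measurable with |f(x,r) − f(x,s)| ≤ L·max_{a∈A}|r(a) − s(a)| and |f(x,r) − f(y,r)| ≤ K‖x−y‖, let κ^{(a)}, a ∈ A, be stochastic kernels on ℝ^d satisfying ∫ w(y) κ^{(a)}(x,dy) ≤ c·w(x), ∫ ‖y‖ κ^{(a)}(x,dy) < ∞, sup_{x,a} w(x)^{-1} ∫ |f(y,0)| κ^{(a)}(x,dy) < ∞, and assume that the Wasserstein-1 distance satisfies W₁(κ^{(a)}(x,·), κ^{(a)}(y,·)) ≤ η‖x−y‖ for all x,y,a. Then the unique solution u (with sup_{x,a}|u(x)(a)|/w(x) < ∞) of (u(x))(a) = ∫ f(y, u(y)) κ^{(a)}(x,dy) satisfies |u(x)(a) − u(y)(a)| ≤ (ηK/(1 − ηL)) ‖x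 − y‖ for all x, y ∈ ℝ^d, a ∈ A. -/
open MeasureTheory ProbabilityTheory

/-- The Wasserstein-1 distance between two probability measures on `ℝ^d`, defined as the
infimum over couplings of the integral of the distance. -/
noncomputable def W1 {d : ℕ} (μ ν : Measure (EuclideanSpace ℝ (Fin d))) : ℝ :=
  sInf { r : ℝ | ∃ π : Measure (EuclideanSpace ℝ (Fin d) × EuclideanSpace ℝ (Fin d)),
    IsProbabilityMeasure π ∧ π.map Prod.fst = μ ∧ π.map Prod.snd = ν ∧
    r = ∫ p, ‖p.1 - p.2‖ ∂π }

private lemma le_of_forall_pos_le_add' {a b : ℝ} (h : ∀ ε : ℝ, 0 < ε → a ≤ b + ε) : a ≤ b := by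
  by_contra hc
  push_neg at hc
  have := h ((a - b) / 2) (by linarith)
  linarith

/-- **Lipschitz continuity of solutions of stochastic fixed point equations.**
If the kernels are `η`-Lipschitz in the Wasserstein-1 distance and the nonlinearity is
`K`-Lipschitz in the space variable and `L`-Lipschitz in the function variable with
`cL < 1` and `ηL < 1`, then the unique `w`-bounded solution `u` of the fixed point equation
is Lipschitz with constant `ηK/(1 − ηL)`. -/
theorem stmt_1 {d : ℕ} {A : Type*} [Fintype A] [Nonempty A]
    (η c L K : ℝ) (hη : 0 ≤ η) (hc : 0 ≤ c) (hL : 0 ≤ L) (hK : 0 ≤ K)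
    (hcL : c * L < 1) (hηL : η * L < 1)
    (w : EuclideanSpace ℝ (Fin d) → ℝ) (hw : Measurable w) (hwpos : ∀ x, 0 < w x)
    (f : EuclideanSpace ℝ (Fin d) → (A → ℝ) → ℝ)
    (hfm : Measurable (fun p : EuclideanSpace ℝ (Fin d) × (A → ℝ) => f p.1 p.2))
    (hflip : ∀ x r s, |f x r - f x s| ≤ L * ⨆ a, |r a - s a|)
    (hfxlip : ∀ x y r, |f x r - f y r| ≤ K * ‖x - y‖)
    (κ : A → Kernel (EuclideanSpace ℝ (Fin d)) (EuclideanSpace ℝ (Fin d)))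
    (hκ : ∀ a, IsMarkovKernel (κ a))
    (hwint : ∀ a x, Integrable w (κ a x))
    (hwbd : ∀ a x, ∫ y, w y ∂(κ a x) ≤ c * w x)
    (hmom : ∀ a x, Integrable (fun y => ‖y‖) (κ a x))
    (hf0int : ∀ a x, Integrable (fun y => f y 0) (κ a x))
    (hf0bd : ∃ C, ∀ a x, ∫ y, |f y 0| ∂(κ a x) ≤ C * w x)
    (hκlip : ∀ a x y, W1 (κ a x) (κ a y) ≤ η * ‖x - y‖)
    (u : EuclideanSpace ℝ (Fin d) → A → ℝ)
    (hum : ∀ a, Measurable fun x => u x a)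
    (hubdd : ∃ C, ∀ x a, |u x a| ≤ C * w x)
    (huint : ∀ a x, Integrable (fun y => f y (u y)) (κ a x))
    (hufix : ∀ a x, u x a = ∫ y, f y (u y) ∂(κ a x)) :
    ∀ x y a, |u x a - u y a| ≤ η * K / (1 - η * L) * ‖x - y‖ := by
  have um : Measurable (fun x : EuclideanSpace ℝ (Fin d) => u x) := measurable_pi_lambda u hum
  have hg : Measurable (fun z : EuclideanSpace ℝ (Fin d) => f z (u z)) :=
    hfm.comp (measurable_id.prodMk um)
  -- near-optimal couplings exist
  have coup : ∀ (a : A) (x y : EuclideanSpace ℝ (Fin d)) (δ : ℝ), 0 < δ →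
      ∃ π : Measure (EuclideanSpace ℝ (Fin d) × EuclideanSpace ℝ (Fin d)),
        IsProbabilityMeasure π ∧ π.map Prod.fst = κ a x ∧
        π.map Prod.snd = κ a y ∧ ∫ p, ‖p.1 - p.2‖ ∂π ≤ η * ‖x - y‖ + δ := by
    intro a x y δ hδ
    haveI := hκ a
    set S := { r : ℝ | ∃ π : Measure (EuclideanSpace ℝ (Fin d) × EuclideanSpace ℝ (Fin d)),
      IsProbabilityMeasure π ∧ π.map Prod.fst = κ a x ∧ π.map Prod.snd = κ a y ∧
      r = ∫ p, ‖p.1 - p.2‖ ∂π } with hS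
    have hne : S.Nonempty := by
      refine ⟨∫ p, ‖p.1 - p.2‖ ∂((κ a x).prod (κ a y)), (κ a x).prod (κ a y), inferInstance,
        ?_, ?_, rfl⟩
      · have h := Measure.fst_prod (μ := κ a x) (ν := κ a y)
        simpa [Measure.fst] using h
      · have h := Measure.snd_prod (μ := κ a x) (ν := κ a y)
        simpa [Measure.snd] using h
    have hlt : sInf S < η * ‖x - y‖ + δ := by
      have h1 : sInf S ≤ η * ‖x - y‖ := hκlip a x y
      linarith
    obtain ⟨r, hrS, hrlt⟩ := exists_lt_of_csInf_lt hne hlt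
    obtain ⟨π, h1, h2, h3, rfl⟩ := hrS
    exact ⟨π, h1, h2, h3, hrlt.le⟩
  -- the key contraction step
  have key : ∀ (T β : ℝ), 0 ≤ K + L * T → 0 ≤ β →
      (∀ x y (a : A), |u x a - u y a| ≤ T * ‖x - y‖ + β * (w x + w y)) →
      ∀ x y (a : A), |u x a - u y a| ≤ η * (K + L * T) * ‖x - y‖ + c * L * β * (w x + w y) := by
    intro T β hT hβ hind x y a
    apply le_of_forall_pos_le_add'
    intro ε hε
    have hKT1 : (0:ℝ) < K + L * T + 1 := by linarith
    set δ := ε / (K + L * T + 1) with hδdef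
    have hδ : 0 < δ := div_pos hε hKT1
    obtain ⟨π, hπP, hπ1, hπ2, hcost⟩ := coup a x y δ hδ
    haveI := hπP
    have intfst : ∀ g : EuclideanSpace ℝ (Fin d) → ℝ, Measurable g → Integrable g (κ a x) →
        Integrable (fun p : EuclideanSpace ℝ (Fin d) × EuclideanSpace ℝ (Fin d) => g p.1) π := by
      intro g hgm hgi
      rw [← hπ1] at hgi
      exact (integrable_map_measure hgm.aestronglyMeasurable measurable_fst.aemeasurable).mp hgi
    have intsnd : ∀ g : EuclideanSpace ℝ (Fin d) → ℝ, Measurable g → Integrable g (κ a y) →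
        Integrable (fun p : EuclideanSpace ℝ (Fin d) × EuclideanSpace ℝ (Fin d) => g p.2) π := by
      intro g hgm hgi
      rw [← hπ2] at hgi
      exact (integrable_map_measure hgm.aestronglyMeasurable measurable_snd.aemeasurable).mp hgi
    have eqfst : ∀ g : EuclideanSpace ℝ (Fin d) → ℝ, Measurable g →
        ∫ p, g p.1 ∂π = ∫ z, g z ∂(κ a x) := by
      intro g hgm
      rw [← hπ1, integral_map measurable_fst.aemeasurable hgm.aestronglyMeasurable]
    have eqsnd : ∀ g : EuclideanSpace ℝ (Fin d) → ℝ, Measurable g →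
        ∫ p, g p.2 ∂π = ∫ z, g z ∂(κ a y) := by
      intro g hgm
      rw [← hπ2, integral_map measurable_snd.aemeasurable hgm.aestronglyMeasurable]
    have hIfx : Integrable (fun p : EuclideanSpace ℝ (Fin d) × EuclideanSpace ℝ (Fin d) =>
        f p.1 (u p.1)) π := intfst _ hg (huint a x)
    have hIfy : Integrable (fun p : EuclideanSpace ℝ (Fin d) × EuclideanSpace ℝ (Fin d) =>
        f p.2 (u p.2)) π := intsnd _ hg (huint a y)
    have hInx : Integrable (fun p : EuclideanSpace ℝ (Fin d) × EuclideanSpace ℝ (Fin d) =>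
        ‖p.1‖) π := intfst _ measurable_norm (hmom a x)
    have hIny : Integrable (fun p : EuclideanSpace ℝ (Fin d) × EuclideanSpace ℝ (Fin d) =>
        ‖p.2‖) π := intsnd _ measurable_norm (hmom a y)
    have hIwx : Integrable (fun p : EuclideanSpace ℝ (Fin d) × EuclideanSpace ℝ (Fin d) =>
        w p.1) π := intfst _ hw (hwint a x)
    have hIwy : Integrable (fun p : EuclideanSpace ℝ (Fin d) × EuclideanSpace ℝ (Fin d) =>
        w p.2) π := intsnd _ hw (hwint a y)
    have hIdist : Integrable (fun p : EuclideanSpace ℝ (Fin d) × EuclideanSpace ℝ (Fin d) =>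
        ‖p.1 - p.2‖) π := by
      refine (hInx.add hIny).mono' ?_ ?_
      · exact (continuous_fst.sub continuous_snd).norm.aestronglyMeasurable
      · filter_upwards with p
        simpa using norm_sub_le p.1 p.2
    have i1 : Integrable (fun p : EuclideanSpace ℝ (Fin d) × EuclideanSpace ℝ (Fin d) =>
        (K + L * T) * ‖p.1 - p.2‖) π := hIdist.const_mul _
    have i2 : Integrable (fun p : EuclideanSpace ℝ (Fin d) × EuclideanSpace ℝ (Fin d) =>
        L * β * (w p.1 + w p.2)) π := (hIwx.add hIwy).const_mul _
    have hIG : Integrable (fun p : EuclideanSpace ℝ (Fin d) × EuclideanSpace ℝ (Fin d) =>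
        (K + L * T) * ‖p.1 - p.2‖ + L * β * (w p.1 + w p.2)) π := i1.add i2
    have e1 : ∫ p : EuclideanSpace ℝ (Fin d) × EuclideanSpace ℝ (Fin d),
        f p.1 (u p.1) ∂π = u x a := by
      rw [eqfst _ hg]; exact (hufix a x).symm
    have e2 : ∫ p : EuclideanSpace ℝ (Fin d) × EuclideanSpace ℝ (Fin d),
        f p.2 (u p.2) ∂π = u y a := by
      rw [eqsnd _ hg]; exact (hufix a y).symm
    have step1 : |u x a - u y a|
        = |∫ p : EuclideanSpace ℝ (Fin d) × EuclideanSpace ℝ (Fin d),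
            (f p.1 (u p.1) - f p.2 (u p.2)) ∂π| := by
      rw [integral_sub hIfx hIfy, e1, e2]
    have step2 : |∫ p : EuclideanSpace ℝ (Fin d) × EuclideanSpace ℝ (Fin d),
          (f p.1 (u p.1) - f p.2 (u p.2)) ∂π|
        ≤ ∫ p, |f p.1 (u p.1) - f p.2 (u p.2)| ∂π := by
      simpa [Real.norm_eq_abs] using
        norm_integral_le_integral_norm
          (fun p : EuclideanSpace ℝ (Fin d) × EuclideanSpace ℝ (Fin d) =>
            f p.1 (u p.1) - f p.2 (u p.2)) (μ := π)
    have step3 : ∫ p : EuclideanSpace ℝ (Fin d) × EuclideanSpace ℝ (Fin d),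
          |f p.1 (u p.1) - f p.2 (u p.2)| ∂π
        ≤ ∫ p : EuclideanSpace ℝ (Fin d) × EuclideanSpace ℝ (Fin d),
            ((K + L * T) * ‖p.1 - p.2‖ + L * β * (w p.1 + w p.2)) ∂π := by
      refine integral_mono (hIfx.sub hIfy).abs hIG ?_
      intro p
      have h1 := hfxlip p.1 p.2 (u p.1)
      have h2 := hflip p.2 (u p.1) (u p.2)
      have h3 : (⨆ b, |u p.1 b - u p.2 b|) ≤ T * ‖p.1 - p.2‖ + β * (w p.1 + w p.2) :=
        ciSup_le fun b => hind p.1 p.2 b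
      have h2' : L * (⨆ b, |u p.1 b - u p.2 b|)
          ≤ L * (T * ‖p.1 - p.2‖ + β * (w p.1 + w p.2)) :=
        mul_le_mul_of_nonneg_left h3 hL
      calc |f p.1 (u p.1) - f p.2 (u p.2)|
          ≤ |f p.1 (u p.1) - f p.2 (u p.1)| + |f p.2 (u p.1) - f p.2 (u p.2)| :=
            abs_sub_le _ _ _
        _ ≤ K * ‖p.1 - p.2‖ + L * (T * ‖p.1 - p.2‖ + β * (w p.1 + w p.2)) :=
            add_le_add h1 (h2.trans h2')
        _ = (K + L * T) * ‖p.1 - p.2‖ + L * β * (w p.1 + w p.2) := by ring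
    have step4 : ∫ p : EuclideanSpace ℝ (Fin d) × EuclideanSpace ℝ (Fin d),
          ((K + L * T) * ‖p.1 - p.2‖ + L * β * (w p.1 + w p.2)) ∂π
        = (K + L * T) * ∫ p, ‖p.1 - p.2‖ ∂π
          + L * β * ((∫ p, w p.1 ∂π) + ∫ p, w p.2 ∂π) := by
      rw [integral_add i1 i2, integral_const_mul, integral_const_mul, integral_add hIwx hIwy]
    have hwx : ∫ p, w p.1 ∂π ≤ c * w x := by rw [eqfst _ hw]; exact hwbd a x
    have hwy : ∫ p, w p.2 ∂π ≤ c * w y := by rw [eqsnd _ hw]; exact hwbd a y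
    have hδε : (K + L * T) * δ ≤ ε := by
      have hfs : (K + L * T + 1) * (ε / (K + L * T + 1)) = ε := by field_simp
      have hmul : (K + L * T) * (ε / (K + L * T + 1))
          ≤ (K + L * T + 1) * (ε / (K + L * T + 1)) :=
        mul_le_mul_of_nonneg_right (by linarith) (div_pos hε hKT1).le
      rw [hδdef]
      linarith
    have hfinal : (K + L * T) * ∫ p, ‖p.1 - p.2‖ ∂π
          + L * β * ((∫ p, w p.1 ∂π) + ∫ p, w p.2 ∂π)
        ≤ η * (K + L * T) * ‖x - y‖ + c * L * β * (w x + w y) + ε := by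
      have b1 : (K + L * T) * ∫ p, ‖p.1 - p.2‖ ∂π ≤ (K + L * T) * (η * ‖x - y‖ + δ) :=
        mul_le_mul_of_nonneg_left hcost hT
      have b2 : L * β * ((∫ p, w p.1 ∂π) + ∫ p, w p.2 ∂π)
          ≤ L * β * (c * w x + c * w y) :=
        mul_le_mul_of_nonneg_left (add_le_add hwx hwy) (mul_nonneg hL hβ)
      nlinarith [b1, b2, hδε]
    calc |u x a - u y a|
        = |∫ p : EuclideanSpace ℝ (Fin d) × EuclideanSpace ℝ (Fin d),
            (f p.1 (u p.1) - f p.2 (u p.2)) ∂π| := step1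
      _ ≤ ∫ p, |f p.1 (u p.1) - f p.2 (u p.2)| ∂π := step2
      _ ≤ ∫ p : EuclideanSpace ℝ (Fin d) × EuclideanSpace ℝ (Fin d),
            ((K + L * T) * ‖p.1 - p.2‖ + L * β * (w p.1 + w p.2)) ∂π := step3
      _ = _ := step4
      _ ≤ η * (K + L * T) * ‖x - y‖ + c * L * β * (w x + w y) + ε := hfinal
  -- setup constants
  obtain ⟨C, hC⟩ := hubdd
  have hC0 : ∀ x (a : A), |u x a| ≤ max C 0 * w x := fun x a =>
    (hC x a).trans (mul_le_mul_of_nonneg_right (le_max_left C 0) (hwpos x).le)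
  have hC0nn : (0:ℝ) ≤ max C 0 := le_max_right _ _
  have h1ηL : (0:ℝ) < 1 - η * L := by linarith
  have hT0 : 0 ≤ η * K / (1 - η * L) := div_nonneg (mul_nonneg hη hK) h1ηL.le
  have hTfix : η * (K + L * (η * K / (1 - η * L))) = η * K / (1 - η * L) := by
    have hne : (1:ℝ) - η * L ≠ 0 := ne_of_gt h1ηL
    rw [eq_div_iff hne]
    rw [mul_add, add_mul, mul_assoc, mul_assoc]
    rw [mul_assoc L _ _, div_mul_cancel₀ _ hne]
    ring
  have hP : ∀ n : ℕ, ∀ x y (a : A), |u x a - u y a|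
      ≤ η * K / (1 - η * L) * ‖x - y‖ + (c * L) ^ n * max C 0 * (w x + w y) := by
    intro n
    induction n with
    | zero =>
      intro x y a
      have h1 : |u x a - u y a| ≤ |u x a| + |u y a| := abs_sub _ _
      have h2 : 0 ≤ η * K / (1 - η * L) * ‖x - y‖ := mul_nonneg hT0 (norm_nonneg _)
      have h3 := hC0 x a
      have h4 := hC0 y a
      simp only [pow_zero, one_mul]
      nlinarith
    | succ n ih =>
      intro x y a
      have hKLT : 0 ≤ K + L * (η * K / (1 - η * L)) := add_nonneg hK (mul_nonneg hL hT0)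
      have hβ : 0 ≤ (c * L) ^ n * max C 0 :=
        mul_nonneg (pow_nonneg (mul_nonneg hc hL) n) hC0nn
      have hstep := key (η * K / (1 - η * L)) ((c * L) ^ n * max C 0) hKLT hβ ih x y a
      calc |u x a - u y a|
          ≤ η * (K + L * (η * K / (1 - η * L))) * ‖x - y‖
              + c * L * ((c * L) ^ n * max C 0) * (w x + w y) := hstep
        _ = η * K / (1 - η * L) * ‖x - y‖ + (c * L) ^ (n + 1) * max C 0 * (w x + w y) := by
            rw [hTfix]; ring
  intro x y a
  have hcl : |c * L| < 1 := by rw [abs_of_nonneg (mul_nonneg hc hL)]; exact hcL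
  have h1 : Filter.Tendsto (fun n : ℕ => (c * L) ^ n) Filter.atTop (nhds 0) :=
    tendsto_pow_atTop_nhds_zero_of_abs_lt_one hcl
  have h2 : Filter.Tendsto
      (fun n : ℕ => η * K / (1 - η * L) * ‖x - y‖ + (c * L) ^ n * max C 0 * (w x + w y))
      Filter.atTop (nhds (η * K / (1 - η * L) * ‖x - y‖ + 0 * max C 0 * (w x + w y))) :=
    Filter.Tendsto.const_add _ ((h1.mul_const (max C 0)).mul_const (w x + w y))
  have hle := ge_of_tendsto' h2 (fun n => hP n x y a)
  simpa using hle
end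

section
/- Let d ∈ ℕ, A a nonempty finite set, η, c, L, K ∈ [0,∞) with cL < 1 and ηL < 1, w : ℝ^d → (0,∞) measurable, f : ℝ^d × ℝ^A → ℝ measurable with |f(x,r) − f(x,s)| ≤ L·max_{a}|r(a)−s(a)| and |f(x,r) − f(y,r)| ≤ K‖x−y‖. Let κ₁^{(a)}, κ₂^{(a)} be stochastic kernels on ℝ^d satisfying, for i ∈ {1,2}: ∫ w(y) κᵢ^{(a)}(x,dy) ≤ c·w(x), ∫ ‖y‖ κᵢ^{(a)}(x,dy) < ∞, sup_{x,a} w(x)^{-1} ∫ |f(y,0)| κᵢ^{(a)}(x,dy) < ∞; and assume W₁(κ₂^{(a)}(x,·), κ₂^{(a)}(y,·)) ≤ η‖x−y‖. If u₁, u₂ are the unique w-bounded solutions of (uᵢ(x))(a) = ∫ f(y, uᵢ(y)) κᵢ^{(a)}(x,dy), then sup_{(x,a)} |u₁(x)(a) − u₂(x)(a)|/w(x) ≤ (K / ((1−ηL)(1−cL))) · sup_{(y,b)} W₁(κ₁^{(b)}(y,·), κ₂^{(b)}(y,·))/w(y). -/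
/-!
Two ingredients. Coupling `μ` and `ν` shows that `|g y - g z| ≤ a ‖y - z‖ + b (w y + w z)` implies
`|∫ g dμ - ∫ g dν| ≤ a W₁(μ, ν) + b (∫ w dμ + ∫ w dν)`. And if `φ ≤ S ρ` holds for some finite `S`
and the fixed point equation turns every such bound into `φ ≤ F(S) ρ`, then the optimal constant
satisfies `S ≤ F(S)`.

First, `u₂` is `ηK/(1-ηL)`-Lipschitz. A priori `u₂` is only `w`-bounded, so its Lipschitz constant
might be infinite; it is finite for the gauge `‖x - y‖ + t (w x + w y)` with `t > 0`, where the
fixed point equation for `κ₂` gives `S ≤ max (η (K + L S)) (c L S)`. Let `t → 0`.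
Then `y ↦ f y (u₂ y)` is `K/(1-ηL)`-Lipschitz, and `Δ = sup |u₁ - u₂| / w` satisfies
`Δ ≤ c L Δ + K/(1-ηL) · D` by the fixed point equations for `κ₁` and `κ₂`.
-/

open MeasureTheory ProbabilityTheory

theorem exists_weighted_bound_le_of_imp {ι : Type*} [Nonempty ι] {φ ρ : ι → ℝ}
    (hφ : ∀ i, 0 ≤ φ i) (hρ : ∀ i, 0 < ρ i) (hbdd : ∃ B, ∀ i, φ i ≤ B * ρ i) (F : ℝ → ℝ)
    (hF : ∀ S, 0 ≤ S → (∀ i, φ i ≤ S * ρ i) → ∀ i, φ i ≤ F S * ρ i) :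
    ∃ S, (∀ i, φ i ≤ S * ρ i) ∧ S ≤ F S := by
  obtain ⟨B, hB⟩ := hbdd
  have hbddAbove : BddAbove (Set.range fun i => φ i / ρ i) :=
    ⟨B, Set.forall_mem_range.2 fun i => (div_le_iff₀ (hρ i)).2 (hB i)⟩
  set S := ⨆ i, φ i / ρ i
  have hS : ∀ i, φ i ≤ S * ρ i := fun i => (div_le_iff₀ (hρ i)).1 (le_ciSup hbddAbove i)
  have hS₀ : 0 ≤ S := (div_nonneg (hφ (Classical.arbitrary ι)) (hρ _).le).trans
    (le_ciSup hbddAbove _)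
  exact ⟨S, hS, ciSup_le fun i => (div_le_iff₀ (hρ i)).2 (hF S hS₀ hS i)⟩

theorem le_of_forall_pos_le_add_mul {a b C : ℝ} (hC : 0 ≤ C) (h : ∀ t > 0, a ≤ b + t * C) :
    a ≤ b := by
  refine le_of_forall_pos_le_add fun ε hε => (h (ε / (C + 1)) (by positivity)).trans ?_
  have : ε / (C + 1) * C ≤ ε := by
    rw [div_mul_eq_mul_div, div_le_iff₀ (by positivity)]
    nlinarith
  linarith

theorem abs_sub_le_of_lipschitz {X A : Type*} [SeminormedAddCommGroup X] [Nonempty A]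
    {f : X → (A → ℝ) → ℝ} {K L : ℝ} (hL : 0 ≤ L)
    (hflip : ∀ x r s, |f x r - f x s| ≤ L * ⨆ a, |r a - s a|)
    (hfxlip : ∀ x y r, |f x r - f y r| ≤ K * ‖x - y‖) {x y : X} {r s : A → ℝ} {R : ℝ}
    (hrs : ∀ a, |r a - s a| ≤ R) :
    |f x r - f y s| ≤ K * ‖x - y‖ + L * R :=
  calc |f x r - f y s| ≤ |f x r - f y r| + |f y r - f y s| := abs_sub_le _ _ _
    _ ≤ K * ‖x - y‖ + L * R :=
      add_le_add (hfxlip x y r) ((hflip y r s).trans (mul_le_mul_of_nonneg_left (ciSup_le hrs) hL))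

theorem integrable_of_abs_sub_le_mul_norm {X : Type*} [SeminormedAddCommGroup X]
    [MeasurableSpace X] {μ : Measure X} [IsFiniteMeasure μ] (hμ : Integrable (fun y => ‖y‖) μ)
    {g : X → ℝ} (hg : AEStronglyMeasurable g μ) {M : ℝ} (hglip : ∀ y, |g y - g 0| ≤ M * ‖y‖) :
    Integrable g μ :=
  ((integrable_const |g 0|).add (hμ.const_mul M)).mono' hg (ae_of_all _ fun y => by
    simp only [Real.norm_eq_abs, Pi.add_apply]
    linarith [abs_sub_abs_le_abs_sub (g y) (g 0), hglip y])

theorem abs_integral_sub_integral_le_of_map_fst_of_map_snd {α : Type*} [MeasurableSpace α]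
    {μ ν : Measure α} {π : Measure (α × α)} (hπμ : π.map Prod.fst = μ)
    (hπν : π.map Prod.snd = ν) {g : α → ℝ} (hgμ : Integrable g μ) (hgν : Integrable g ν)
    {h : α × α → ℝ} (hh : Integrable h π) (hgh : ∀ y z, |g y - g z| ≤ h (y, z)) :
    |∫ y, g y ∂μ - ∫ y, g y ∂ν| ≤ ∫ p, h p ∂π := by
  subst hπμ hπν
  have hg₁ : Integrable (fun p : α × α => g p.1) π := hgμ.comp_measurable measurable_fst
  have hg₂ : Integrable (fun p : α × α => g p.2) π := hgν.comp_measurable measurable_snd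
  rw [integral_map measurable_fst.aemeasurable hgμ.aestronglyMeasurable,
    integral_map measurable_snd.aemeasurable hgν.aestronglyMeasurable, ← integral_sub hg₁ hg₂]
  exact abs_integral_le_integral_abs.trans <|
    integral_mono (hg₁.sub hg₂).abs hh fun p => hgh p.1 p.2

section Euclidean

variable {d : ℕ}

local notation "E" => EuclideanSpace ℝ (Fin d)

theorem abs_integral_sub_integral_le_W1 {μ ν : Measure E}
    [IsProbabilityMeasure μ] [IsProbabilityMeasure ν]
    (hμ : Integrable (fun y => ‖y‖) μ) (hν : Integrable (fun y => ‖y‖) ν)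
    {g w : E → ℝ} (hgμ : Integrable g μ) (hgν : Integrable g ν)
    (hwμ : Integrable w μ) (hwν : Integrable w ν) {a b : ℝ} (ha : 0 ≤ a)
    (hg : ∀ y z, |g y - g z| ≤ a * ‖y - z‖ + b * (w y + w z)) :
    |∫ y, g y ∂μ - ∫ y, g y ∂ν| ≤ a * W1 μ ν + b * (∫ y, w y ∂μ + ∫ y, w y ∂ν) := by
  suffices hcoupling : ∀ π : Measure (E × E), IsProbabilityMeasure π → π.map Prod.fst = μ →
      π.map Prod.snd = ν → |∫ y, g y ∂μ - ∫ y, g y ∂ν| - b * (∫ y, w y ∂μ + ∫ y, w y ∂ν) ≤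
        a * ∫ p, ‖p.1 - p.2‖ ∂π by
    have hprod : (μ.prod ν).map Prod.fst = μ ∧ (μ.prod ν).map Prod.snd = ν := by
      simp [Measure.map_fst_prod, Measure.map_snd_prod]
    rw [← sub_le_iff_le_add, W1, ← smul_eq_mul a, ← Real.sInf_smul_of_nonneg ha]
    refine le_csInf (Set.Nonempty.smul_set ⟨_, μ.prod ν, inferInstance, hprod.1, hprod.2, rfl⟩) ?_
    rintro _ ⟨_, ⟨π, hπ, hπμ, hπν, rfl⟩, rfl⟩
    exact hcoupling π hπ hπμ hπν
  intro π _ hπμ hπν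
  subst hπμ hπν
  have hfst : ∀ {φ : E → ℝ}, Integrable φ (π.map Prod.fst) →
      Integrable (fun p : E × E => φ p.1) π := fun hφ => hφ.comp_measurable measurable_fst
  have hsnd : ∀ {φ : E → ℝ}, Integrable φ (π.map Prod.snd) →
      Integrable (fun p : E × E => φ p.2) π := fun hφ => hφ.comp_measurable measurable_snd
  have hdist : Integrable (fun p : E × E => ‖p.1 - p.2‖) π :=
    ((hfst hμ).add (hsnd hν)).mono' (by fun_prop) (ae_of_all _ fun p => by
      simpa using norm_sub_le p.1 p.2)
  have hw : Integrable (fun p : E × E => w p.1 + w p.2) π := (hfst hwμ).add (hsnd hwν)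
  have hbound := abs_integral_sub_integral_le_of_map_fst_of_map_snd rfl rfl hgμ hgν
    (h := fun p => a * ‖p.1 - p.2‖ + b * (w p.1 + w p.2))
    ((hdist.const_mul a).add (hw.const_mul b)) hg
  rw [integral_add (hdist.const_mul a) (hw.const_mul b), integral_const_mul, integral_const_mul,
    integral_add (hfst hwμ) (hsnd hwν),
    ← integral_map measurable_fst.aemeasurable hwμ.aestronglyMeasurable,
    ← integral_map measurable_snd.aemeasurable hwν.aestronglyMeasurable] at hbound
  linarith

variable {A : Type*} [Nonempty A] {w : EuclideanSpace ℝ (Fin d) → ℝ}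
  {f : EuclideanSpace ℝ (Fin d) → (A → ℝ) → ℝ}

theorem abs_fixedPoint_sub_le_of_gauge_bound {η c L K : ℝ} (hL : 0 ≤ L) (hK : 0 ≤ K)
    (hflip : ∀ x r s, |f x r - f x s| ≤ L * ⨆ a, |r a - s a|)
    (hfxlip : ∀ x y r, |f x r - f y r| ≤ K * ‖x - y‖)
    {κ : A → Kernel E E} [∀ a, IsMarkovKernel (κ a)]
    (hwint : ∀ a x, Integrable w (κ a x)) (hwbd : ∀ a x, ∫ y, w y ∂(κ a x) ≤ c * w x)
    (hmom : ∀ a x, Integrable (fun y => ‖y‖) (κ a x))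
    (hκlip : ∀ a x y, W1 (κ a x) (κ a y) ≤ η * ‖x - y‖) {u : E → A → ℝ}
    (huint : ∀ a x, Integrable (fun y => f y (u y)) (κ a x))
    (hufix : ∀ a x, u x a = ∫ y, f y (u y) ∂(κ a x)) {t S : ℝ} (ht : 0 ≤ t) (hS₀ : 0 ≤ S)
    (hS : ∀ y z b, |u y b - u z b| ≤ S * (‖y - z‖ + t * (w y + w z))) (x y : E) (a : A) :
    |u x a - u y a| ≤ η * (K + L * S) * ‖x - y‖ + c * L * S * (t * (w x + w y)) := by
  have hg : ∀ y z, |f y (u y) - f z (u z)| ≤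
      (K + L * S) * ‖y - z‖ + L * S * t * (w y + w z) := fun y z => by
    have := abs_sub_le_of_lipschitz hL hflip hfxlip (x := y) (y := z) (r := u y) (s := u z)
      (R := S * (‖y - z‖ + t * (w y + w z))) (hS y z)
    linarith
  have hW := abs_integral_sub_integral_le_W1 (hmom a x) (hmom a y) (huint a x) (huint a y)
    (hwint a x) (hwint a y) (by positivity) hg
  rw [← hufix, ← hufix] at hW
  calc |u x a - u y a|
      ≤ (K + L * S) * W1 (κ a x) (κ a y) +
          L * S * t * (∫ z, w z ∂(κ a x) + ∫ z, w z ∂(κ a y)) := hW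
    _ ≤ (K + L * S) * (η * ‖x - y‖) + L * S * t * (c * w x + c * w y) := by
      gcongr
      exacts [hκlip a x y, hwbd a x, hwbd a y]
    _ = η * (K + L * S) * ‖x - y‖ + c * L * S * (t * (w x + w y)) := by ring

theorem abs_fixedPoint_sub_le_gauge {η c L K : ℝ} (hη : 0 ≤ η) (hL : 0 ≤ L) (hK : 0 ≤ K)
    (hcL : c * L < 1) (hηL : η * L < 1) (hwpos : ∀ x, 0 < w x)
    (hflip : ∀ x r s, |f x r - f x s| ≤ L * ⨆ a, |r a - s a|)
    (hfxlip : ∀ x y r, |f x r - f y r| ≤ K * ‖x - y‖)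
    {κ : A → Kernel E E} [∀ a, IsMarkovKernel (κ a)]
    (hwint : ∀ a x, Integrable w (κ a x)) (hwbd : ∀ a x, ∫ y, w y ∂(κ a x) ≤ c * w x)
    (hmom : ∀ a x, Integrable (fun y => ‖y‖) (κ a x))
    (hκlip : ∀ a x y, W1 (κ a x) (κ a y) ≤ η * ‖x - y‖)
    {u : E → A → ℝ} (hubdd : ∃ C, ∀ x a, |u x a| ≤ C * w x)
    (huint : ∀ a x, Integrable (fun y => f y (u y)) (κ a x))
    (hufix : ∀ a x, u x a = ∫ y, f y (u y) ∂(κ a x)) {t : ℝ} (ht : 0 < t) (x y : E) (a : A) :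
    |u x a - u y a| ≤ η * K / (1 - η * L) * (‖x - y‖ + t * (w x + w y)) := by
  set ρ : E × E × A → ℝ := fun i => ‖i.1 - i.2.1‖ + t * (w i.1 + w i.2.1)
  have hρ : ∀ i, 0 < ρ i := fun i => by
    have := hwpos i.1; have := hwpos i.2.1; positivity
  have hbdd : ∃ B, ∀ i : E × E × A, |u i.1 i.2.2 - u i.2.1 i.2.2| ≤ B * ρ i := by
    obtain ⟨C, hC⟩ := hubdd
    refine ⟨max C 0 / t, fun ⟨x, y, a⟩ => ?_⟩
    calc |u x a - u y a| ≤ |u x a| + |u y a| := abs_sub _ _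
      _ ≤ max C 0 * (w x + w y) := by
        nlinarith [hC x a, hC y a, le_max_left C 0, hwpos x, hwpos y]
      _ ≤ max C 0 / t * ρ (x, y, a) := by
        rw [div_mul_eq_mul_div, le_div_iff₀ ht]
        nlinarith [norm_nonneg (x - y), le_max_right C 0]
  obtain ⟨S, hS, hSF⟩ := exists_weighted_bound_le_of_imp (fun _ => abs_nonneg _) hρ hbdd
    (fun S => max (η * (K + L * S)) (c * L * S)) fun S hS₀ hS ⟨x, y, a⟩ => by
      have := hwpos x; have := hwpos y
      refine (abs_fixedPoint_sub_le_of_gauge_bound hL hK hflip hfxlip hwint hwbd hmom hκlip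
        huint hufix ht.le hS₀ (fun y z b => hS (y, z, b)) x y a).trans ?_
      rw [mul_add (max _ _)]
      gcongr
      exacts [le_max_left _ _, le_max_right _ _]
  -- In the case `S ≤ c L S` of the maximum, `S ≤ 0`.
  have hSle : S ≤ η * K / (1 - η * L) := by
    rw [le_div_iff₀ (by linarith)]
    rcases le_max_iff.1 hSF with h | h <;> nlinarith [mul_nonneg hη hK]
  exact (hS (x, y, a)).trans (mul_le_mul_of_nonneg_right hSle (hρ _).le)

theorem abs_fixedPoint_sub_le_norm {η c L K : ℝ} (hη : 0 ≤ η) (hL : 0 ≤ L) (hK : 0 ≤ K)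
    (hcL : c * L < 1) (hηL : η * L < 1) (hwpos : ∀ x, 0 < w x)
    (hflip : ∀ x r s, |f x r - f x s| ≤ L * ⨆ a, |r a - s a|)
    (hfxlip : ∀ x y r, |f x r - f y r| ≤ K * ‖x - y‖)
    {κ : A → Kernel E E} [∀ a, IsMarkovKernel (κ a)]
    (hwint : ∀ a x, Integrable w (κ a x)) (hwbd : ∀ a x, ∫ y, w y ∂(κ a x) ≤ c * w x)
    (hmom : ∀ a x, Integrable (fun y => ‖y‖) (κ a x))
    (hκlip : ∀ a x y, W1 (κ a x) (κ a y) ≤ η * ‖x - y‖)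
    {u : E → A → ℝ} (hubdd : ∃ C, ∀ x a, |u x a| ≤ C * w x)
    (huint : ∀ a x, Integrable (fun y => f y (u y)) (κ a x))
    (hufix : ∀ a x, u x a = ∫ y, f y (u y) ∂(κ a x)) (x y : E) (a : A) :
    |u x a - u y a| ≤ η * K / (1 - η * L) * ‖x - y‖ := by
  refine le_of_forall_pos_le_add_mul (C := η * K / (1 - η * L) * (w x + w y))
    (by have := hwpos x; have := hwpos y; positivity) fun t ht => ?_
  have := abs_fixedPoint_sub_le_gauge hη hL hK hcL hηL hwpos hflip hfxlip hwint hwbd hmom hκlip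
    hubdd huint hufix ht x y a
  linarith

theorem abs_fixedPoint_sub_fixedPoint_le_of_weighted_bound {c L M : ℝ} (hL : 0 ≤ L)
    (hM : 0 ≤ M) (hflip : ∀ x r s, |f x r - f x s| ≤ L * ⨆ a, |r a - s a|)
    {κ₁ κ₂ : A → Kernel E E} [∀ a, IsMarkovKernel (κ₁ a)] [∀ a, IsMarkovKernel (κ₂ a)]
    (hwint₁ : ∀ a x, Integrable w (κ₁ a x)) (hwint₂ : ∀ a x, Integrable w (κ₂ a x))
    (hwbd₁ : ∀ a x, ∫ y, w y ∂(κ₁ a x) ≤ c * w x)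
    (hmom₁ : ∀ a x, Integrable (fun y => ‖y‖) (κ₁ a x))
    (hmom₂ : ∀ a x, Integrable (fun y => ‖y‖) (κ₂ a x)) {u₁ u₂ : E → A → ℝ}
    (hu₁int : ∀ a x, Integrable (fun y => f y (u₁ y)) (κ₁ a x))
    (hu₂int₁ : ∀ a x, Integrable (fun y => f y (u₂ y)) (κ₁ a x))
    (hu₂int : ∀ a x, Integrable (fun y => f y (u₂ y)) (κ₂ a x))
    (hu₁fix : ∀ a x, u₁ x a = ∫ y, f y (u₁ y) ∂(κ₁ a x))
    (hu₂fix : ∀ a x, u₂ x a = ∫ y, f y (u₂ y) ∂(κ₂ a x))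
    (hglip : ∀ y z, |f y (u₂ y) - f z (u₂ z)| ≤ M * ‖y - z‖)
    {D : ℝ} (hD : ∀ b y, W1 (κ₁ b y) (κ₂ b y) ≤ D * w y) {Δ : ℝ} (hΔ₀ : 0 ≤ Δ)
    (hΔ : ∀ y b, |u₁ y b - u₂ y b| ≤ Δ * w y) (x : E) (a : A) :
    |u₁ x a - u₂ x a| ≤ (c * L * Δ + M * D) * w x := by
  set g : E → ℝ := fun y => f y (u₂ y)
  have hfg : ∀ y, |f y (u₁ y) - g y| ≤ L * Δ * w y := fun y => by
    rw [mul_assoc]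
    exact (hflip y _ _).trans (mul_le_mul_of_nonneg_left (ciSup_le (hΔ y)) hL)
  have h₁ : |∫ y, (f y (u₁ y) - g y) ∂(κ₁ a x)| ≤ c * L * Δ * w x :=
    calc |∫ y, (f y (u₁ y) - g y) ∂(κ₁ a x)| ≤ ∫ y, L * Δ * w y ∂(κ₁ a x) :=
          abs_integral_le_integral_abs.trans <|
            integral_mono ((hu₁int a x).sub (hu₂int₁ a x)).abs ((hwint₁ a x).const_mul _) hfg
      _ ≤ L * Δ * (c * w x) := by
        rw [integral_const_mul]; gcongr; exact hwbd₁ a x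
      _ = c * L * Δ * w x := by ring
  have h₂ := abs_integral_sub_integral_le_W1 (hmom₁ a x) (hmom₂ a x) (hu₂int₁ a x)
    (hu₂int a x) (hwint₁ a x) (hwint₂ a x) (b := 0) hM fun y z => by simpa using hglip y z
  rw [zero_mul, add_zero] at h₂
  have hu : u₁ x a - u₂ x a = ∫ y, (f y (u₁ y) - g y) ∂(κ₁ a x) +
      (∫ y, g y ∂(κ₁ a x) - ∫ y, g y ∂(κ₂ a x)) := by
    rw [hu₁fix, hu₂fix, integral_sub (hu₁int a x) (hu₂int₁ a x)]
    ring
  calc |u₁ x a - u₂ x a| ≤ c * L * Δ * w x + M * W1 (κ₁ a x) (κ₂ a x) := by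
        rw [hu]; exact (abs_add_le _ _).trans (add_le_add h₁ h₂)
    _ ≤ c * L * Δ * w x + M * (D * w x) := by gcongr; exact hD a x
    _ = (c * L * Δ + M * D) * w x := by ring

theorem abs_fixedPoint_sub_fixedPoint_le {c L K : ℝ} (hL : 0 ≤ L) (hK : 0 ≤ K)
    (hcL : c * L < 1) (hwpos : ∀ x, 0 < w x)
    (hfm : Measurable (fun p : E × (A → ℝ) => f p.1 p.2))
    (hflip : ∀ x r s, |f x r - f x s| ≤ L * ⨆ a, |r a - s a|)
    (hfxlip : ∀ x y r, |f x r - f y r| ≤ K * ‖x - y‖)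
    {κ₁ κ₂ : A → Kernel E E} [∀ a, IsMarkovKernel (κ₁ a)] [∀ a, IsMarkovKernel (κ₂ a)]
    (hwint₁ : ∀ a x, Integrable w (κ₁ a x)) (hwint₂ : ∀ a x, Integrable w (κ₂ a x))
    (hwbd₁ : ∀ a x, ∫ y, w y ∂(κ₁ a x) ≤ c * w x)
    (hmom₁ : ∀ a x, Integrable (fun y => ‖y‖) (κ₁ a x))
    (hmom₂ : ∀ a x, Integrable (fun y => ‖y‖) (κ₂ a x))
    {u₁ u₂ : E → A → ℝ} (hu₂m : ∀ a, Measurable fun x => u₂ x a)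
    (hu₁bdd : ∃ C, ∀ x a, |u₁ x a| ≤ C * w x) (hu₂bdd : ∃ C, ∀ x a, |u₂ x a| ≤ C * w x)
    (hu₁int : ∀ a x, Integrable (fun y => f y (u₁ y)) (κ₁ a x))
    (hu₂int : ∀ a x, Integrable (fun y => f y (u₂ y)) (κ₂ a x))
    (hu₁fix : ∀ a x, u₁ x a = ∫ y, f y (u₁ y) ∂(κ₁ a x))
    (hu₂fix : ∀ a x, u₂ x a = ∫ y, f y (u₂ y) ∂(κ₂ a x))
    {S : ℝ} (hS : 0 ≤ S) (hu₂lip : ∀ x y a, |u₂ x a - u₂ y a| ≤ S * ‖x - y‖)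
    {D : ℝ} (hD : ∀ b y, W1 (κ₁ b y) (κ₂ b y) ≤ D * w y) (x : E) (a : A) :
    |u₁ x a - u₂ x a| ≤ (K + L * S) * D / (1 - c * L) * w x := by
  have hglip : ∀ y z, |f y (u₂ y) - f z (u₂ z)| ≤ (K + L * S) * ‖y - z‖ := fun y z => by
    have := abs_sub_le_of_lipschitz hL hflip hfxlip (x := y) (y := z) (r := u₂ y) (s := u₂ z)
      (R := S * ‖y - z‖) fun a => hu₂lip y z a
    linarith
  have hu₂int₁ : ∀ a x, Integrable (fun y => f y (u₂ y)) (κ₁ a x) := fun a x =>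
    integrable_of_abs_sub_le_mul_norm (hmom₁ a x)
      (hfm.comp (measurable_id.prodMk (measurable_pi_lambda _ hu₂m))).aestronglyMeasurable
      fun y => by simpa using hglip y 0
  have hbdd : ∃ B, ∀ i : E × A, |u₁ i.1 i.2 - u₂ i.1 i.2| ≤ B * w i.1 := by
    obtain ⟨C₁, hC₁⟩ := hu₁bdd
    obtain ⟨C₂, hC₂⟩ := hu₂bdd
    exact ⟨C₁ + C₂, fun ⟨x, a⟩ => (abs_sub _ _).trans (by linarith [hC₁ x a, hC₂ x a])⟩
  obtain ⟨Δ, hΔ, hΔF⟩ := exists_weighted_bound_le_of_imp (fun _ => abs_nonneg _)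
    (ρ := fun i : E × A => w i.1) (fun i => hwpos i.1) hbdd
    (fun Δ => c * L * Δ + (K + L * S) * D) fun Δ hΔ₀ hΔ ⟨x, a⟩ =>
      abs_fixedPoint_sub_fixedPoint_le_of_weighted_bound hL (by positivity) hflip hwint₁ hwint₂
        hwbd₁ hmom₁ hmom₂ hu₁int hu₂int₁ hu₂int hu₁fix hu₂fix hglip hD hΔ₀
        (fun y b => hΔ (y, b)) x a
  have hΔle : Δ ≤ (K + L * S) * D / (1 - c * L) := by
    rw [le_div_iff₀ (by linarith)]; linarith
  exact (hΔ (x, a)).trans (mul_le_mul_of_nonneg_right hΔle (hwpos x).le)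

end Euclidean

theorem stmt_2_general {d : ℕ} {A : Type*} [Nonempty A]
    (η c L K : ℝ) (hη : 0 ≤ η) (hL : 0 ≤ L) (hK : 0 ≤ K)
    (hcL : c * L < 1) (hηL : η * L < 1)
    (w : EuclideanSpace ℝ (Fin d) → ℝ) (hwpos : ∀ x, 0 < w x)
    (f : EuclideanSpace ℝ (Fin d) → (A → ℝ) → ℝ)
    (hfm : Measurable (fun p : EuclideanSpace ℝ (Fin d) × (A → ℝ) => f p.1 p.2))
    (hflip : ∀ x r s, |f x r - f x s| ≤ L * ⨆ a, |r a - s a|)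
    (hfxlip : ∀ x y r, |f x r - f y r| ≤ K * ‖x - y‖)
    (κ₁ κ₂ : A → Kernel (EuclideanSpace ℝ (Fin d)) (EuclideanSpace ℝ (Fin d)))
    (hκ₁ : ∀ a, IsMarkovKernel (κ₁ a)) (hκ₂ : ∀ a, IsMarkovKernel (κ₂ a))
    (hwint₁ : ∀ a x, Integrable w (κ₁ a x)) (hwint₂ : ∀ a x, Integrable w (κ₂ a x))
    (hwbd₁ : ∀ a x, ∫ y, w y ∂(κ₁ a x) ≤ c * w x)
    (hwbd₂ : ∀ a x, ∫ y, w y ∂(κ₂ a x) ≤ c * w x)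
    (hmom₁ : ∀ a x, Integrable (fun y => ‖y‖) (κ₁ a x))
    (hmom₂ : ∀ a x, Integrable (fun y => ‖y‖) (κ₂ a x))
    (hκ₂lip : ∀ a x y, W1 (κ₂ a x) (κ₂ a y) ≤ η * ‖x - y‖)
    (u₁ u₂ : EuclideanSpace ℝ (Fin d) → A → ℝ)
    (hu₂m : ∀ a, Measurable fun x => u₂ x a)
    (hu₁bdd : ∃ C, ∀ x a, |u₁ x a| ≤ C * w x)
    (hu₂bdd : ∃ C, ∀ x a, |u₂ x a| ≤ C * w x)
    (hu₁int : ∀ a x, Integrable (fun y => f y (u₁ y)) (κ₁ a x))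
    (hu₂int : ∀ a x, Integrable (fun y => f y (u₂ y)) (κ₂ a x))
    (hu₁fix : ∀ a x, u₁ x a = ∫ y, f y (u₁ y) ∂(κ₁ a x))
    (hu₂fix : ∀ a x, u₂ x a = ∫ y, f y (u₂ y) ∂(κ₂ a x))
    (D : ℝ) (hD : ∀ b y, W1 (κ₁ b y) (κ₂ b y) ≤ D * w y) :
    ∀ x a, |u₁ x a - u₂ x a| ≤ K / ((1 - η * L) * (1 - c * L)) * D * w x := by
  have hu₂lip := abs_fixedPoint_sub_le_norm hη hL hK hcL hηL hwpos hflip hfxlip hwint₂ hwbd₂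
    hmom₂ hκ₂lip hu₂bdd hu₂int hu₂fix
  intro x a
  calc |u₁ x a - u₂ x a| ≤ (K + L * (η * K / (1 - η * L))) * D / (1 - c * L) * w x :=
        abs_fixedPoint_sub_fixedPoint_le hL hK hcL hwpos hfm hflip hfxlip hwint₁ hwint₂ hwbd₁
          hmom₁ hmom₂ hu₂m hu₁bdd hu₂bdd hu₁int hu₂int hu₁fix hu₂fix
          (div_nonneg (by positivity) (by linarith)) hu₂lip hD x a
    _ = K / ((1 - η * L) * (1 - c * L)) * D * w x := by
      have hηL' : 1 - η * L ≠ 0 := by linarith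
      have hM : K + L * (η * K / (1 - η * L)) = K / (1 - η * L) := by
        rw [eq_div_iff hηL', add_mul, mul_div_assoc', div_mul_cancel₀ _ hηL']
        ring
      rw [hM, ← div_div]
      ring

/-- **Stability of stochastic fixed point equations with respect to the kernels.**
If `u₁, u₂` are the unique `w`-bounded solutions of the fixed point equations for the same
nonlinearity `f` but different kernels `κ₁, κ₂`, then the weighted distance of `u₁` and `u₂`
is controlled by the weighted Wasserstein-1 distance of the kernels. -/
theorem stmt_2 {d : ℕ} {A : Type*} [Fintype A] [Nonempty A]
    (η c L K : ℝ) (hη : 0 ≤ η) (hc : 0 ≤ c) (hL : 0 ≤ L) (hK : 0 ≤ K)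
    (hcL : c * L < 1) (hηL : η * L < 1)
    (w : EuclideanSpace ℝ (Fin d) → ℝ) (hw : Measurable w) (hwpos : ∀ x, 0 < w x)
    (f : EuclideanSpace ℝ (Fin d) → (A → ℝ) → ℝ)
    (hfm : Measurable (fun p : EuclideanSpace ℝ (Fin d) × (A → ℝ) => f p.1 p.2))
    (hflip : ∀ x r s, |f x r - f x s| ≤ L * ⨆ a, |r a - s a|)
    (hfxlip : ∀ x y r, |f x r - f y r| ≤ K * ‖x - y‖)
    (κ₁ κ₂ : A → Kernel (EuclideanSpace ℝ (Fin d)) (EuclideanSpace ℝ (Fin d)))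
    (hκ₁ : ∀ a, IsMarkovKernel (κ₁ a)) (hκ₂ : ∀ a, IsMarkovKernel (κ₂ a))
    (hwint₁ : ∀ a x, Integrable w (κ₁ a x)) (hwint₂ : ∀ a x, Integrable w (κ₂ a x))
    (hwbd₁ : ∀ a x, ∫ y, w y ∂(κ₁ a x) ≤ c * w x)
    (hwbd₂ : ∀ a x, ∫ y, w y ∂(κ₂ a x) ≤ c * w x)
    (hmom₁ : ∀ a x, Integrable (fun y => ‖y‖) (κ₁ a x))
    (hmom₂ : ∀ a x, Integrable (fun y => ‖y‖) (κ₂ a x))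
    (hf0int₁ : ∀ a x, Integrable (fun y => f y 0) (κ₁ a x))
    (hf0int₂ : ∀ a x, Integrable (fun y => f y 0) (κ₂ a x))
    (hf0bd₁ : ∃ C, ∀ a x, ∫ y, |f y 0| ∂(κ₁ a x) ≤ C * w x)
    (hf0bd₂ : ∃ C, ∀ a x, ∫ y, |f y 0| ∂(κ₂ a x) ≤ C * w x)
    (hκ₂lip : ∀ a x y, W1 (κ₂ a x) (κ₂ a y) ≤ η * ‖x - y‖)
    (u₁ u₂ : EuclideanSpace ℝ (Fin d) → A → ℝ)
    (hu₁m : ∀ a, Measurable fun x => u₁ x a)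
    (hu₂m : ∀ a, Measurable fun x => u₂ x a)
    (hu₁bdd : ∃ C, ∀ x a, |u₁ x a| ≤ C * w x)
    (hu₂bdd : ∃ C, ∀ x a, |u₂ x a| ≤ C * w x)
    (hu₁int : ∀ a x, Integrable (fun y => f y (u₁ y)) (κ₁ a x))
    (hu₂int : ∀ a x, Integrable (fun y => f y (u₂ y)) (κ₂ a x))
    (hu₁fix : ∀ a x, u₁ x a = ∫ y, f y (u₁ y) ∂(κ₁ a x))
    (hu₂fix : ∀ a x, u₂ x a = ∫ y, f y (u₂ y) ∂(κ₂ a x))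
    (D : ℝ) (hD : ∀ b y, W1 (κ₁ b y) (κ₂ b y) ≤ D * w y) :
    ∀ x a, |u₁ x a - u₂ x a| ≤ K / ((1 - η * L) * (1 - c * L)) * D * w x :=
  stmt_2_general η c L K hη hL hK hcL hηL w hwpos f hfm hflip hfxlip κ₁ κ₂ hκ₁ hκ₂ hwint₁ hwint₂
    hwbd₁ hwbd₂ hmom₁ hmom₂ hκ₂lip u₁ u₂ hu₂m hu₁bdd hu₂bdd hu₁int hu₂int hu₁fix hu₂fix D hD
end

section
/- Let β ∈ [0,∞)∖{1} and let φ : ℝ → ℝ be the leaky ReLU φ(x) = max{x, βx}. Set γ = |1−β|/((1−β)(1−β²)) and δ = |1−β|/(1−β). Then for all y₁, y₂ ∈ ℝ it holds that γ·φ(δ(y₁−y₂)) + γβ·φ(−δ(y₁−y₂)) + γ·φ(δy₂) + γβ·φ(−δy₂) − γβ·φ(δy₂) − γ·φ(−δy₂) = max{y₁, y₂}. -/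
/-- **Exact representation of the maximum of two reals by leaky ReLU units.**
For the leaky ReLU `φ(x) = max{x, βx}` with `β ∈ [0,∞) \ {1}` and the constants
`γ = |1−β|/((1−β)(1−β²))`, `δ = |1−β|/(1−β)`, the maximum of two real numbers is an exact
linear combination of leaky ReLU evaluations. -/
theorem stmt_6 (β : ℝ) (hβ0 : 0 ≤ β) (hβ1 : β ≠ 1)
    (φ : ℝ → ℝ) (hφ : ∀ x, φ x = max x (β * x))
    (γ δ : ℝ) (hγ : γ = |1 - β| / ((1 - β) * (1 - β ^ 2)))
    (hδ : δ = |1 - β| / (1 - β)) :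
    ∀ y₁ y₂ : ℝ,
      γ * φ (δ * (y₁ - y₂)) + γ * β * φ (-(δ * (y₁ - y₂))) + γ * φ (δ * y₂)
        + γ * β * φ (-(δ * y₂)) - γ * β * φ (δ * y₂) - γ * φ (-(δ * y₂)) = max y₁ y₂ := by
  intro y₁ y₂
  have hA : ∀ x : ℝ, γ * φ (δ * x) + γ * β * φ (-(δ * x)) = max x 0 := by
    intro x
    rcases lt_or_gt_of_ne hβ1 with hb | hb
    · -- β < 1
      have h1 : (0:ℝ) < 1 - β := by linarith
      have habs : |1 - β| = 1 - β := abs_of_pos h1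
      have hδ1 : δ = 1 := by rw [hδ, habs]; field_simp
      have hγ' : γ = (1 - β) / ((1 - β) * (1 - β ^ 2)) := by rw [hγ, habs]
      have h2 : (0:ℝ) < 1 + β := by linarith
      have hne1 : (1:ℝ) - β ≠ 0 := by linarith
      have hne2 : (1:ℝ) - β ^ 2 ≠ 0 := by nlinarith
      rcases le_total 0 x with hx | hx
      · rw [hδ1, hφ, hφ, one_mul,
          max_eq_left (by nlinarith : β * x ≤ x),
          max_eq_right (by nlinarith : -x ≤ β * -x),
          max_eq_left hx, hγ']
        field_simp [hne1, hne2]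
        ring
      · rw [hδ1, hφ, hφ, one_mul,
          max_eq_right (by nlinarith : x ≤ β * x),
          max_eq_left (by nlinarith : β * -x ≤ -x),
          max_eq_right (hx), hγ']
        field_simp [hne1, hne2]
        ring
    · -- β > 1
      have h1 : 1 - β < 0 := by linarith
      have habs : |1 - β| = -(1 - β) := abs_of_neg h1
      have hne1 : (1:ℝ) - β ≠ 0 := by linarith
      have hne2 : (1:ℝ) - β ^ 2 ≠ 0 := by nlinarith
      have hδ1 : δ = -1 := by
        rw [hδ, habs, div_eq_iff hne1]; ring
      have hγ' : γ = -(1 - β) / ((1 - β) * (1 - β ^ 2)) := by rw [hγ, habs]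
      have h2 : (0:ℝ) < 1 + β := by linarith
      rcases le_total 0 x with hx | hx
      · rw [hδ1, hφ, hφ]
        have e1 : max (-1 * x) (β * (-1 * x)) = -x := by
          rw [max_eq_left (by nlinarith : β * (-1 * x) ≤ -1 * x)]; ring
        have e2 : max (-(-1 * x)) (β * -(-1 * x)) = β * x := by
          rw [max_eq_right (by nlinarith : -(-1 * x) ≤ β * -(-1 * x))]; ring
        rw [e1, e2, max_eq_left hx, hγ']
        field_simp [hne1, hne2]
        ring
      · rw [hδ1, hφ, hφ]
        have e1 : max (-1 * x) (β * (-1 * x)) = -(β * x) := by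
          rw [max_eq_right (by nlinarith : -1 * x ≤ β * (-1 * x))]; ring
        have e2 : max (-(-1 * x)) (β * -(-1 * x)) = x := by
          rw [max_eq_left (by nlinarith : β * -(-1 * x) ≤ -(-1 * x))]; ring
        rw [e1, e2, max_eq_right hx, hγ']
        field_simp [hne1, hne2]
        ring
  have hC : ∀ x : ℝ, γ * β * φ (δ * x) + γ * φ (-(δ * x)) = max (-x) 0 := by
    intro x
    have := hA (-x)
    have h1 : δ * -x = -(δ * x) := by ring
    have h2 : -(δ * -x) = δ * x := by ring
    rw [h1, neg_neg] at this
    linarith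
  have key1 := hA (y₁ - y₂)
  have key2 := hA y₂
  have key3 := hC y₂
  have : γ * φ (δ * (y₁ - y₂)) + γ * β * φ (-(δ * (y₁ - y₂))) + γ * φ (δ * y₂)
        + γ * β * φ (-(δ * y₂)) - γ * β * φ (δ * y₂) - γ * φ (-(δ * y₂))
      = max (y₁ - y₂) 0 + max y₂ 0 - max (-y₂) 0 := by linarith
  rw [this]
  rcases le_total y₁ y₂ with h | h
  · rw [max_eq_right (by linarith : y₁ - y₂ ≤ 0), max_eq_right h]
    rcases le_total 0 y₂ with h2 | h2
    · rw [max_eq_right (by linarith : -y₂ ≤ 0), max_eq_left h2]; ring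
    · rw [max_eq_left (by linarith : 0 ≤ -y₂), max_eq_right h2]; ring
  · rw [max_eq_left (by linarith : 0 ≤ y₁ - y₂), max_eq_left h]
    rcases le_total 0 y₂ with h2 | h2
    · rw [max_eq_right (by linarith : -y₂ ≤ 0), max_eq_left h2]; ring
    · rw [max_eq_left (by linarith : 0 ≤ -y₂), max_eq_right h2]; ring
end

section
/- Let β ∈ [0,∞)∖{1} and φ(x) = max{x,βx}. Then for every m ∈ ℕ with m ≥ 2 there exists a neural network Ψₘ such that its φ-realization R_φ(Ψₘ) ∈ C(ℝ^m, ℝ) satisfies R_φ(Ψₘ)(x₁,…,xₘ) = max_{1≤i≤m} xᵢ for all x ∈ ℝ^m, the maximal layer width of Ψₘ is at most 2m, and the number of affine layers of Ψₘ equals ⌈log₂(m)⌉ + 1. -/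
/-- A feedforward artificial neural network: a positive number `depth` of affine layers,
layer dimensions `dims 0, …, dims depth` (all positive; values of `dims` beyond `depth`
are irrelevant), and for each layer `k < depth` a weight matrix
`W k : ℝ^{dims (k+1) × dims k}` and a bias vector `B k : ℝ^{dims (k+1)}`. -/
structure ANN where
  depth : ℕ
  depth_pos : 0 < depth
  dims : ℕ → ℕ
  dims_pos : ∀ k, 0 < dims k
  W : (k : ℕ) → Matrix (Fin (dims (k + 1))) (Fin (dims k)) ℝ
  B : (k : ℕ) → Fin (dims (k + 1)) → ℝ

namespace ANN

/-- The result of the first `k` affine layers, with the activation `φ` applied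
componentwise after each of them. -/
noncomputable def hidden (φ : ℝ → ℝ) (Φ : ANN) :
    (k : ℕ) → (Fin (Φ.dims 0) → ℝ) → Fin (Φ.dims k) → ℝ
  | 0 => fun x => x
  | (k + 1) => fun x j => φ ((∑ i, Φ.W k j i * hidden φ Φ k x i) + Φ.B k j)

/-- The realization of the network `Φ` with activation function `φ`: the composition of all
affine layers with `φ` applied componentwise after every layer except the last one. -/
noncomputable def realize (φ : ℝ → ℝ) (Φ : ANN) (x : Fin (Φ.dims 0) → ℝ) :
    Fin (Φ.dims Φ.depth) → ℝ := fun j =>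
  let j' : Fin (Φ.dims (Φ.depth - 1 + 1)) :=
    Fin.cast (congrArg Φ.dims (by have := Φ.depth_pos; omega : Φ.depth = Φ.depth - 1 + 1)) j
  (∑ i, Φ.W (Φ.depth - 1) j' i * hidden φ Φ (Φ.depth - 1) x i) + Φ.B (Φ.depth - 1) j'

end ANN

namespace Stmt9Aux

noncomputable def c1 (β : ℝ) : ℝ := (1+β)⁻¹
noncomputable def c2 (β : ℝ) : ℝ := (2*(1+β))⁻¹
noncomputable def c3 (β : ℝ) : ℝ := (2*|1-β|)⁻¹

def ia (m j : ℕ) : ℕ := if j < 4*(m/2) then 2*(j/4) else m-1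
def ib (m j : ℕ) : ℕ := if j < 4*(m/2) then 2*(j/4)+1 else m-1
noncomputable def ca (m j : ℕ) : ℝ := if j < 4*(m/2) then (if j%4 = 0 then 1 else if j%4 = 1 then -1 else if j%4 = 2 then 1 else -1) else (if j = 4*(m/2) then 1 else -1)
noncomputable def cb (m j : ℕ) : ℝ := if j < 4*(m/2) then (if j%4 = 0 then 1 else if j%4 = 1 then -1 else if j%4 = 2 then -1 else 1) else 0

noncomputable def pmat (m : ℕ) : Matrix (Fin (2*m)) (Fin m) ℝ := fun j i =>
  ca m j * (if (i:ℕ) = ia m j then 1 else 0) + cb m j * (if (i:ℕ) = ib m j then 1 else 0)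

noncomputable def scoef (β : ℝ) (s : ℕ) : ℝ := if s = 0 then c2 β else if s = 1 then -c2 β else c3 β

noncomputable def dmat (β : ℝ) (m : ℕ) : Matrix (Fin ((m+1)/2)) (Fin (2*m)) ℝ := fun g j =>
  if (j:ℕ) < 4*(m/2) then (if (j:ℕ)/4 = (g:ℕ) then scoef β ((j:ℕ)%4) else 0)
  else (if (g:ℕ) = m/2 then (if (j:ℕ) = 4*(m/2) then c1 β else -c1 β) else 0)

noncomputable def xx {m : ℕ} (x : Fin m → ℝ) (n : ℕ) : ℝ := if h : n < m then x ⟨n,h⟩ else 0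

noncomputable def pairmax {m : ℕ} (x : Fin m → ℝ) (g : Fin ((m+1)/2)) : ℝ :=
  if 2*(g:ℕ)+1 < m then max (xx x (2*(g:ℕ))) (xx x (2*(g:ℕ)+1)) else xx x (2*(g:ℕ))

lemma sum_onehot {n : ℕ} (a : ℕ) (c : ℝ) (y : Fin n → ℝ) (ha : a < n) :
    (∑ j : Fin n, (if (j:ℕ) = a then c else 0) * y j) = c * y ⟨a, ha⟩ := by
  have h : ∀ j : Fin n, (if (j:ℕ) = a then c else 0) * y j
      = if j = ⟨a,ha⟩ then c * y ⟨a,ha⟩ else 0 := by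
    intro j
    by_cases hj : j = ⟨a,ha⟩
    · subst hj; simp
    · rw [if_neg (fun hc => hj (Fin.ext hc)), if_neg hj, zero_mul]
  rw [Finset.sum_congr rfl fun j _ => h j, Finset.sum_ite_eq' Finset.univ,
    if_pos (Finset.mem_univ _)]

lemma sum_ind {m : ℕ} (a : ℕ) (x : Fin m → ℝ) :
    (∑ i : Fin m, (if (i:ℕ) = a then (1:ℝ) else 0) * x i) = xx x a := by
  unfold xx
  split
  · next h => rw [sum_onehot a 1 x h, one_mul]
  · next h =>
    apply Finset.sum_eq_zero; intro i _
    rw [if_neg (by have := i.isLt; omega), zero_mul]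

lemma row_eval {m : ℕ} (x : Fin m → ℝ) (j : Fin (2*m)) :
    (∑ i, pmat m j i * x i) = ca m (j:ℕ) * xx x (ia m (j:ℕ)) + cb m (j:ℕ) * xx x (ib m (j:ℕ)) := by
  have h : ∀ i : Fin m, pmat m j i * x i
      = ca m (j:ℕ) * ((if (i:ℕ) = ia m (j:ℕ) then (1:ℝ) else 0) * x i)
        + cb m (j:ℕ) * ((if (i:ℕ) = ib m (j:ℕ) then (1:ℝ) else 0) * x i) := by
    intro i; unfold pmat; ring
  rw [Finset.sum_congr rfl fun i _ => h i, Finset.sum_add_distrib,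
    ← Finset.mul_sum, ← Finset.mul_sum, sum_ind, sum_ind]

section Phi
variable {β : ℝ} {φ : ℝ → ℝ} (hβ0 : 0 ≤ β) (hβ1 : β ≠ 1) (hφ : ∀ x, φ x = max x (β * x))
include hβ0 hβ1 hφ

lemma phi_diff (t : ℝ) : φ t - φ (-t) = (1+β)*t := by
  rw [hφ, hφ, show β * (-t) = -(β*t) by ring, max_neg_neg]
  have := max_add_min t (β*t)
  linarith

lemma phi_sum (t : ℝ) : φ t + φ (-t) = |1-β| * |t| := by
  rw [hφ, hφ, show β * (-t) = -(β*t) by ring, max_neg_neg]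
  have h := max_sub_min_eq_abs t (β*t)
  have h2 : |t - β*t| = |1-β| * |t| := by rw [← abs_mul]; ring_nf
  have h3 : |β*t - t| = |t - β*t| := abs_sub_comm _ _
  linarith

lemma phi_half (t : ℝ) : c2 β * φ t + (-c2 β) * φ (-t) = t/2 := by
  have h := phi_diff hβ0 hβ1 hφ t
  have hb : (1:ℝ)+β > 0 := by linarith
  have : c2 β * (φ t - φ (-t)) = t/2 := by
    rw [h, c2]; field_simp
  linarith [this]

lemma phi_habs (t : ℝ) : c3 β * φ t + c3 β * φ (-t) = |t|/2 := by
  have h := phi_sum hβ0 hβ1 hφ t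
  have hb : |1-β| > 0 := by
    apply abs_pos.2; intro hc; apply hβ1; linarith
  have : c3 β * (φ t + φ (-t)) = |t|/2 := by
    rw [h, c3]; field_simp
  linarith [this]

lemma phi_one (t : ℝ) : c1 β * φ t + (-c1 β) * φ (-t) = t := by
  have h := phi_diff hβ0 hβ1 hφ t
  have hb : (1:ℝ)+β > 0 := by linarith
  have : c1 β * (φ t - φ (-t)) = t := by
    rw [h, c1]; field_simp
  linarith [this]

lemma phi_max (a b : ℝ) :
    c2 β * φ (a+b) + (-c2 β) * φ (-(a+b)) + (c3 β * φ (a-b) + c3 β * φ (-(a-b))) = max a b := by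
  have h1 := phi_half hβ0 hβ1 hφ (a+b)
  have h2 := phi_habs hβ0 hβ1 hφ (a-b)
  have h3 := max_add_min a b
  have h4 := max_sub_min_eq_abs a b
  have h5 : |b - a| = |a - b| := abs_sub_comm _ _
  linarith

end Phi

section Decode
variable {β : ℝ} {φ : ℝ → ℝ} (hβ0 : 0 ≤ β) (hβ1 : β ≠ 1) (hφ : ∀ x, φ x = max x (β * x))
include hβ0 hβ1 hφ

lemma decode {m : ℕ} (hm : 2 ≤ m) (x : Fin m → ℝ) (g : Fin ((m+1)/2)) :
    (∑ j : Fin (2*m), dmat β m g j * φ ((∑ i, pmat m j i * x i) + 0)) = pairmax x g := by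
  have hrow : ∀ (j : Fin (2*m)), ((∑ i, pmat m j i * x i) + 0)
      = ca m (j:ℕ) * xx x (ia m (j:ℕ)) + cb m (j:ℕ) * xx x (ib m (j:ℕ)) := by
    intro j; rw [add_zero, row_eval]
  have hg := g.isLt
  by_cases hgp : (g:ℕ) < m/2
  -- pair case
  · have hdm : ∀ j : Fin (2*m), dmat β m g j =
        (if (j:ℕ) = 4*(g:ℕ) then c2 β else 0)
        + ((if (j:ℕ) = 4*(g:ℕ)+1 then -c2 β else 0)
        + ((if (j:ℕ) = 4*(g:ℕ)+2 then c3 β else 0)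
        + (if (j:ℕ) = 4*(g:ℕ)+3 then c3 β else 0))) := by
      intro j
      have hj := j.isLt
      simp only [dmat, scoef]
      split_ifs <;> first | ring1 | (exfalso; omega)
    have hb0 : 4*(g:ℕ) < 2*m := by omega
    have hb1 : 4*(g:ℕ)+1 < 2*m := by omega
    have hb2 : 4*(g:ℕ)+2 < 2*m := by omega
    have hb3 : 4*(g:ℕ)+3 < 2*m := by omega
    rw [Finset.sum_congr rfl fun j _ => by rw [hdm j]]
    simp only [add_mul, Finset.sum_add_distrib]
    rw [sum_onehot _ _ _ hb0, sum_onehot _ _ _ hb1, sum_onehot _ _ _ hb2, sum_onehot _ _ _ hb3]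
    set A := xx x (2*(g:ℕ)) with hA
    set B := xx x (2*(g:ℕ)+1) with hB
    have hdiv : ∀ s : ℕ, s < 4 → (4*(g:ℕ)+s)/4 = (g:ℕ) := by intro s hs; omega
    have hca : ∀ s : ℕ, s < 4 → ca m (4*(g:ℕ)+s)
        = (if s = 0 then 1 else if s = 1 then -1 else if s = 2 then 1 else -1) := by
      intro s hs
      rw [ca, if_pos (by omega : 4*(g:ℕ)+s < 4*(m/2)),
        show (4*(g:ℕ)+s)%4 = s by omega]
    have hcb : ∀ s : ℕ, s < 4 → cb m (4*(g:ℕ)+s)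
        = (if s = 0 then 1 else if s = 1 then -1 else if s = 2 then -1 else 1) := by
      intro s hs
      rw [cb, if_pos (by omega : 4*(g:ℕ)+s < 4*(m/2)),
        show (4*(g:ℕ)+s)%4 = s by omega]
    have hia : ∀ s : ℕ, s < 4 → ia m (4*(g:ℕ)+s) = 2*(g:ℕ) := by
      intro s hs
      rw [ia, if_pos (by omega : 4*(g:ℕ)+s < 4*(m/2)), hdiv s hs]
    have hib : ∀ s : ℕ, s < 4 → ib m (4*(g:ℕ)+s) = 2*(g:ℕ)+1 := by
      intro s hs
      rw [ib, if_pos (by omega : 4*(g:ℕ)+s < 4*(m/2)), hdiv s hs]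
    have e0 : ((∑ i, pmat m (⟨4*(g:ℕ), hb0⟩ : Fin (2*m)) i * x i) + 0) = A + B := by
      rw [hrow]
      have := hca 0 (by omega); have := hcb 0 (by omega)
      have := hia 0 (by omega); have := hib 0 (by omega)
      simp only [Nat.add_zero] at *
      simp only [Fin.val_mk, *]
      norm_num
    have e1 : ((∑ i, pmat m (⟨4*(g:ℕ)+1, hb1⟩ : Fin (2*m)) i * x i) + 0) = -(A + B) := by
      rw [hrow]
      simp only [Fin.val_mk, hca 1 (by omega), hcb 1 (by omega), hia 1 (by omega),
        hib 1 (by omega)]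
      norm_num
      ring
    have e2 : ((∑ i, pmat m (⟨4*(g:ℕ)+2, hb2⟩ : Fin (2*m)) i * x i) + 0) = A - B := by
      rw [hrow]
      simp only [Fin.val_mk, hca 2 (by omega), hcb 2 (by omega), hia 2 (by omega),
        hib 2 (by omega)]
      norm_num
      ring
    have e3 : ((∑ i, pmat m (⟨4*(g:ℕ)+3, hb3⟩ : Fin (2*m)) i * x i) + 0) = -(A - B) := by
      rw [hrow]
      simp only [Fin.val_mk, hca 3 (by omega), hcb 3 (by omega), hia 3 (by omega),
        hib 3 (by omega)]
      norm_num
      ring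
    rw [e0, e1, e2, e3]
    have hmax := phi_max hβ0 hβ1 hφ A B
    have hpm : pairmax x g = max A B := by
      rw [pairmax, if_pos (by omega : 2*(g:ℕ)+1 < m)]
    rw [hpm]
    linarith
  -- singleton case
  · have hgm : (g:ℕ) = m/2 := by omega
    have hodd : m % 2 = 1 := by omega
    have hdm : ∀ j : Fin (2*m), dmat β m g j =
        (if (j:ℕ) = 4*(m/2) then c1 β else 0)
        + (if (j:ℕ) = 4*(m/2)+1 then -c1 β else 0) := by
      intro j
      have hj := j.isLt
      simp only [dmat, scoef]
      split_ifs <;> first | ring1 | (exfalso; omega)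
    have hb0 : 4*(m/2) < 2*m := by omega
    have hb1 : 4*(m/2)+1 < 2*m := by omega
    rw [Finset.sum_congr rfl fun j _ => by rw [hdm j]]
    simp only [add_mul, Finset.sum_add_distrib]
    rw [sum_onehot _ _ _ hb0, sum_onehot _ _ _ hb1]
    set T := xx x (m-1) with hT
    have q0a : ca m (4*(m/2)) = 1 := by
      rw [ca, if_neg (by omega : ¬ 4*(m/2) < 4*(m/2)), if_pos rfl]
    have q0b : cb m (4*(m/2)) = 0 := by
      rw [cb, if_neg (by omega : ¬ 4*(m/2) < 4*(m/2))]
    have q1a : ca m (4*(m/2)+1) = -1 := by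
      rw [ca, if_neg (by omega : ¬ 4*(m/2)+1 < 4*(m/2)),
        if_neg (by omega : ¬ 4*(m/2)+1 = 4*(m/2))]
    have q1b : cb m (4*(m/2)+1) = 0 := by
      rw [cb, if_neg (by omega : ¬ 4*(m/2)+1 < 4*(m/2))]
    have qia : ia m (4*(m/2)) = m-1 := by
      rw [ia, if_neg (by omega : ¬ 4*(m/2) < 4*(m/2))]
    have qib : ib m (4*(m/2)) = m-1 := by
      rw [ib, if_neg (by omega : ¬ 4*(m/2) < 4*(m/2))]
    have qia1 : ia m (4*(m/2)+1) = m-1 := by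
      rw [ia, if_neg (by omega : ¬ 4*(m/2)+1 < 4*(m/2))]
    have qib1 : ib m (4*(m/2)+1) = m-1 := by
      rw [ib, if_neg (by omega : ¬ 4*(m/2)+1 < 4*(m/2))]
    have e0 : ((∑ i, pmat m (⟨4*(m/2), hb0⟩ : Fin (2*m)) i * x i) + 0) = T := by
      rw [hrow]
      simp only [Fin.val_mk, q0a, q0b, qia, qib, hT]
      ring
    have e1 : ((∑ i, pmat m (⟨4*(m/2)+1, hb1⟩ : Fin (2*m)) i * x i) + 0) = -T := by
      rw [hrow]
      simp only [Fin.val_mk, q1a, q1b, qia1, qib1, hT]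
      ring
    rw [e0, e1]
    have hone := phi_one hβ0 hβ1 hφ T
    have hpm : pairmax x g = T := by
      rw [pairmax, if_neg (by omega : ¬ 2*(g:ℕ)+1 < m), hT]
      congr 1
      omega
    rw [hpm]
    linarith

end Decode

lemma pairmax_iSup {m : ℕ} (hm : 1 ≤ m) (x : Fin m → ℝ) :
    (⨆ g, pairmax x g) = ⨆ i, x i := by
  haveI : Nonempty (Fin m) := ⟨⟨0, by omega⟩⟩
  haveI : Nonempty (Fin ((m+1)/2)) := ⟨⟨0, by omega⟩⟩
  have bx : BddAbove (Set.range x) := (Set.finite_range x).bddAbove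
  have bp : BddAbove (Set.range (pairmax x)) := (Set.finite_range _).bddAbove
  have hxx : ∀ (n : ℕ) (h : n < m), xx x n = x ⟨n,h⟩ := fun n h => dif_pos h
  apply le_antisymm
  · apply ciSup_le
    intro g
    have hg := g.isLt
    rw [pairmax]
    split
    · next h =>
      apply max_le
      · rw [hxx _ (by omega)]; exact le_ciSup bx _
      · rw [hxx _ (by omega)]; exact le_ciSup bx _
    · next h =>
      rw [hxx _ (by omega)]; exact le_ciSup bx _
  · apply ciSup_le
    intro i
    have hi := i.isLt
    have key : x i ≤ pairmax x ⟨(i:ℕ)/2, by omega⟩ := by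
      rw [pairmax]
      simp only [Fin.val_mk]
      split
      · next h =>
        rcases (by omega : (i:ℕ) = 2*((i:ℕ)/2) ∨ (i:ℕ) = 2*((i:ℕ)/2)+1) with hc | hc
        · rw [hxx _ (by omega)]
          have : (⟨2*((i:ℕ)/2), by omega⟩ : Fin m) = i := Fin.ext (by simp only [Fin.val_mk]; omega)
          rw [this]
          exact le_max_left _ _
        · rw [hxx (2*((i:ℕ)/2)+1) (by omega)]
          have : (⟨2*((i:ℕ)/2)+1, by omega⟩ : Fin m) = i := Fin.ext (by simp only [Fin.val_mk]; omega)
          rw [this]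
          exact le_max_right _ _
      · next h =>
        rw [hxx _ (by omega)]
        have : (⟨2*((i:ℕ)/2), by omega⟩ : Fin m) = i := Fin.ext (by simp only [Fin.val_mk]; omega)
        rw [this]
    exact key.trans (le_ciSup bp _)

end Stmt9Aux


section Main

open Stmt9Aux

theorem stmt9_main (β : ℝ) (hβ0 : 0 ≤ β) (hβ1 : β ≠ 1)
    (φ : ℝ → ℝ) (hφ : ∀ x, φ x = max x (β * x)) :
    ∀ m, 2 ≤ m → ∃ (Ψ : ANN) (h0 : Ψ.dims 0 = m) (h1 : Ψ.dims Ψ.depth = 1),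
      (∀ k ≤ Ψ.depth, Ψ.dims k ≤ 2 * m) ∧
      Ψ.depth = Nat.clog 2 m + 1 ∧
      ∀ x : Fin m → ℝ,
        ANN.realize φ Ψ (fun j => x (Fin.cast h0 j)) (Fin.cast h1.symm 0) = ⨆ i, x i := by
  intro M
  induction M using Nat.strong_induction_on with
  | _ m IH =>
  intro hm
  by_cases hm2 : m = 2
  · -- base case m = 2
    subst hm2
    refine ⟨ANN.mk 2 (by omega)
      (fun k => match k with | 0 => 2 | 1 => 4 | (_+2) => 1)
      (fun k => match k with
        | 0 => show 0 < 2 by omega | 1 => show 0 < 4 by omega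
        | (_+2) => show 0 < 1 by omega)
      (fun k => match k with
        | 0 => pmat 2
        | 1 => dmat β 2
        | (_+2) => fun _ _ => 0)
      (fun _ => 0), rfl, rfl, ?_, ?_, ?_⟩
    · intro k hk
      rcases k with _|_|k
      · show (2:ℕ) ≤ 2*2; omega
      · show (4:ℕ) ≤ 2*2; omega
      · show (1:ℕ) ≤ 2*2; omega
    · show 2 = Nat.clog 2 2 + 1
      rw [Nat.clog_eq_one le_rfl le_rfl]
    · intro x
      simp only [Fin.cast_refl, id_eq]
      have hsup : (⨆ i, x i) = max (x 0) (x 1) := by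
        have bx : BddAbove (Set.range x) := (Set.finite_range x).bddAbove
        apply le_antisymm
        · apply ciSup_le
          intro i
          fin_cases i
          · exact le_max_left _ _
          · exact le_max_right _ _
        · exact max_le_iff.mpr ⟨le_ciSup bx 0, le_ciSup bx 1⟩
      rw [hsup]
      have hdec := decode hβ0 hβ1 hφ (le_refl 2) x (⟨0, by omega⟩ : Fin ((2+1)/2))
      have hpm : pairmax x (⟨0, by omega⟩ : Fin ((2+1)/2)) = max (x 0) (x 1) := by
        rw [pairmax, if_pos (by omega : 2*((⟨0, by omega⟩ : Fin ((2+1)/2)):ℕ)+1 < 2)]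
        rw [show 2*((⟨0, by omega⟩ : Fin ((2+1)/2)):ℕ) = 0 from rfl]
        rw [show (xx x 0) = x 0 from rfl, show (xx x 1) = x 1 from rfl]
      show (∑ j : Fin (2*2), dmat β 2 (⟨0, by omega⟩ : Fin ((2+1)/2)) j
          * φ ((∑ i : Fin 2, pmat 2 j i * x i) + 0)) + 0 = x 0 ⊔ x 1
      rw [add_zero, hdec, hpm]
  · -- step case: m ≥ 3
    have hm3 : 3 ≤ m := by omega
    have hn2 : 2 ≤ (m+1)/2 := by omega
    have hnm : (m+1)/2 < m := by omega
    obtain ⟨Ψ', h0', h1', hw', hd', hr'⟩ := IH ((m+1)/2) hnm hn2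
    obtain ⟨d, dpos, D, Dpos, W', B'⟩ := Ψ'
    have hclpos : 0 < Nat.clog 2 ((m+1)/2) := Nat.clog_pos one_lt_two hn2
    have hd'' : d = Nat.clog 2 ((m+1)/2) + 1 := hd'
    obtain ⟨e, rfl⟩ : ∃ e, d = e + 2 := ⟨Nat.clog 2 ((m+1)/2) - 1, by omega⟩
    have hD0 : D 0 = (m+1)/2 := h0'
    have hcl : Nat.clog 2 m = Nat.clog 2 ((m+1)/2) + 1 := by
      rw [Nat.clog_of_two_le one_lt_two hm, show (m+2-1)/2 = (m+1)/2 by omega]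
    set N : ANN := ANN.mk (e+3) (by omega)
      (fun k => match k with | 0 => m | 1 => 2*m | (k+2) => D (k+1))
      (fun k => match k with
        | 0 => show 0 < m by omega | 1 => show 0 < 2*m by omega
        | (k+2) => Dpos (k+1))
      (fun k => match k with
        | 0 => pmat m
        | 1 => fun q j => ∑ g : Fin ((m+1)/2), W' 0 q (Fin.cast hD0.symm g) * dmat β m g j
        | (k+2) => W' (k+1))
      (fun k => match k with
        | 0 => 0
        | 1 => B' 0
        | (k+2) => B' (k+1)) with hN
    refine ⟨N, rfl, h1', ?_, ?_, ?_⟩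
    · intro k hk
      rcases k with _|_|k
      · show m ≤ 2*m; omega
      · show 2*m ≤ 2*m; omega
      · show D (k+1) ≤ 2*m
        have h1 := hw' (k+1) (by
          show k+1 ≤ e+2
          have : k+2 ≤ e+3 := hk
          omega)
        have h2 : D (k+1) ≤ 2 * ((m+1)/2) := h1
        omega
    · show e + 3 = Nat.clog 2 m + 1
      omega
    · intro x
      have hm1 : 1 ≤ m := by omega
      simp only [Fin.cast_refl, id_eq]
      have C2 : ∀ k : ℕ, ANN.hidden φ N (k+2) x
          = ANN.hidden φ (ANN.mk (e+2) dpos D Dpos W' B') (k+1)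
              (fun j => pairmax x (Fin.cast h0' j)) := by
        intro k
        induction k with
        | zero =>
          funext q
          show φ ((∑ i : Fin (2*m),
              (∑ g : Fin ((m+1)/2), W' 0 q (Fin.cast hD0.symm g) * dmat β m g i)
                * ANN.hidden φ N 1 x i) + B' 0 q)
            = φ ((∑ g' : Fin (D 0), W' 0 q g' * pairmax x (Fin.cast h0' g')) + B' 0 q)
          congr 1
          congr 1
          calc ∑ i : Fin (2*m),
                (∑ g : Fin ((m+1)/2), W' 0 q (Fin.cast hD0.symm g) * dmat β m g i)
                  * ANN.hidden φ N 1 x i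
              = ∑ g : Fin ((m+1)/2), W' 0 q (Fin.cast hD0.symm g)
                  * ∑ i : Fin (2*m), dmat β m g i * ANN.hidden φ N 1 x i := by
                simp only [Finset.sum_mul]
                rw [Finset.sum_comm]
                simp only [Finset.mul_sum, mul_assoc]
            _ = ∑ g : Fin ((m+1)/2), W' 0 q (Fin.cast hD0.symm g) * pairmax x g := by
                refine Finset.sum_congr rfl fun g _ => ?_
                congr 1
                have hh : ∀ i : Fin (2*m), ANN.hidden φ N 1 x i
                    = φ ((∑ i' : Fin m, pmat m i i' * x i') + 0) := fun i => rfl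
                rw [Finset.sum_congr rfl fun i _ => by rw [hh i]]
                exact decode hβ0 hβ1 hφ hm x g
            _ = ∑ g' : Fin (D 0), W' 0 q g' * pairmax x (Fin.cast h0' g') := by
                apply Fintype.sum_equiv (finCongr hD0.symm)
                intro g
                rfl
        | succ k ih =>
          funext q
          show φ ((∑ i : Fin (D (k+1)), W' (k+1) q i * ANN.hidden φ N (k+2) x i) + B' (k+1) q)
            = φ ((∑ i : Fin (D (k+1)), W' (k+1) q i
                * ANN.hidden φ (ANN.mk (e+2) dpos D Dpos W' B') (k+1)
                    (fun j => pairmax x (Fin.cast h0' j)) i) + B' (k+1) q)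
          rw [ih]
      refine Eq.trans ?_ ((hr' (pairmax x)).trans (pairmax_iSup hm1 x))
      show (∑ i : Fin (D (e+1)), W' (e+1) (Fin.cast h1'.symm 0) i
            * ANN.hidden φ N (e+2) x i) + B' (e+1) (Fin.cast h1'.symm 0)
          = ANN.realize φ (ANN.mk (e+2) dpos D Dpos W' B')
              (fun j => pairmax x (Fin.cast h0' j)) (Fin.cast h1'.symm 0)
      rw [C2 e]
      rfl

end Main

/-- **Leaky ReLU networks computing the maximum of `m` reals** (Lemma on the maximum of a
finite set): for every `m ≥ 2` there is a network `Ψₘ` with realization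
`(x₁,…,xₘ) ↦ max_i xᵢ`, all layer widths at most `2m`, and exactly `⌈log₂ m⌉ + 1` affine
layers. -/
theorem stmt_9 (β : ℝ) (hβ0 : 0 ≤ β) (hβ1 : β ≠ 1)
    (φ : ℝ → ℝ) (hφ : ∀ x, φ x = max x (β * x))
    (m : ℕ) (hm : 2 ≤ m) :
    ∃ (Ψ : ANN) (h0 : Ψ.dims 0 = m) (h1 : Ψ.dims Ψ.depth = 1),
      (∀ k ≤ Ψ.depth, Ψ.dims k ≤ 2 * m) ∧
      Ψ.depth = Nat.clog 2 m + 1 ∧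
      ∀ x : Fin m → ℝ,
        ANN.realize φ Ψ (fun j => x (Fin.cast h0 j)) (Fin.cast h1.symm 0) = ⨆ i, x i := by
  exact stmt9_main β hβ0 hβ1 φ hφ m hm
end
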